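/- arXiv:1705.10858 — 6 statements merged into one kernel-verified Lean document; each statement's English description precedes it below -/
import Mathlib

section
/- Let A be a ring with orthogonal idempotents e_x, e_y (possibly equal), and let J ⊆ e_x A e_y be a sub-(e_x A e_x, e_y A e_y)-bimodule, i.e. e_x A e_x · J ⊆ J and J · e_y A e_y ⊆ J. Let ⟨J⟩ = A J A be the two-sided ideal of A generated by J. Then e_x ⟨J⟩ e_y = J. In particular the map J ↦ ⟨J⟩ from subbimodules of e_x A e_y to two-sided ideals of A is injective. -/
/-- The key lemma: every element `a` of the span of `J` satisfies
`∀ b c, ex * b * a * (c * ey) ∈ J`, hence `ex * a * ey ∈ J`. -/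
lemma corner_span_mem
    (A : Type*) [Ring A] (ex ey : A)
    (hx : ex * ex = ex) (hy : ey * ey = ey)
    (J : AddSubgroup A)
    (hJcorner : ∀ a ∈ J, ex * a * ey = a)
    (hJleft : ∀ b : A, ∀ a ∈ J, (ex * b * ex) * a ∈ J)
    (hJright : ∀ b : A, ∀ a ∈ J, a * (ey * b * ey) ∈ J)
    {a : A} (ha : a ∈ TwoSidedIdeal.span (J : Set A)) :
    ex * a * ey ∈ J := by
  set K : TwoSidedIdeal A := TwoSidedIdeal.mk'
    {a : A | ∀ b c : A, ex * b * a * c * ey ∈ J}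
    (by intro b c; simpa using J.zero_mem)
    (by intro x y hxm hym b c
        have := J.add_mem (hxm b c) (hym b c)
        simpa [mul_add, add_mul] using this)
    (by intro x hxm b c
        have := J.neg_mem (hxm b c)
        simpa [mul_neg, neg_mul] using this)
    (by intro x y hym b c
        have := hym (b * x) c
        simpa [mul_assoc] using this)
    (by intro x y hxm b c
        have := hxm b (y * c)
        simpa [mul_assoc] using this) with hK
  have hsub : (J : Set A) ⊆ (K : Set A) := by
    intro j hj
    rw [hK, TwoSidedIdeal.coe_mk']
    intro b c
    have h1 : ex * b * j * c * ey = (ex * b * ex) * j * (ey * c * ey) := by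
      conv_lhs => rw [← hJcorner j hj]
      noncomm_ring
    rw [h1]
    exact hJright _ _ (hJleft _ _ hj)
  have haK : a ∈ K := TwoSidedIdeal.mem_span_iff.mp ha K hsub
  rw [hK, TwoSidedIdeal.mem_mk'] at haK
  have := haK ex ey
  rw [hx] at this
  have h2 : ex * a * ey * ey = ex * a * ey := by rw [mul_assoc, hy]
  rwa [h2] at this

/-- A subbimodule `J ⊆ e_x A e_y` of a ring with idempotents `e_x, e_y` satisfies
`e_x ⟨J⟩ e_y = J` for the two-sided ideal `⟨J⟩` it generates; in particular `J ↦ ⟨J⟩`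
is injective on subbimodules. -/
theorem corner_of_span_subbimodule_eq
    (A : Type*) [Ring A] (ex ey : A)
    (hx : ex * ex = ex) (hy : ey * ey = ey)
    (J : AddSubgroup A)
    (hJcorner : ∀ a ∈ J, ex * a * ey = a)
    (hJleft : ∀ b : A, ∀ a ∈ J, (ex * b * ex) * a ∈ J)
    (hJright : ∀ b : A, ∀ a ∈ J, a * (ey * b * ey) ∈ J) :
    (fun a => ex * a * ey) '' (TwoSidedIdeal.span (J : Set A) : Set A) = (J : Set A) ∧
    (∀ J' : AddSubgroup A,
      (∀ a ∈ J', ex * a * ey = a) →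
      (∀ b : A, ∀ a ∈ J', (ex * b * ex) * a ∈ J') →
      (∀ b : A, ∀ a ∈ J', a * (ey * b * ey) ∈ J') →
      TwoSidedIdeal.span (J : Set A) = TwoSidedIdeal.span (J' : Set A) → J = J') := by
  constructor
  · ext a
    constructor
    · rintro ⟨b, hb, rfl⟩
      exact corner_span_mem A ex ey hx hy J hJcorner hJleft hJright hb
    · intro ha
      exact ⟨a, TwoSidedIdeal.subset_span ha, hJcorner a ha⟩
  · intro J' hc' hl' hr' hspan
    ext a
    constructor
    · intro ha
      have : ex * a * ey ∈ J' := by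
        apply corner_span_mem A ex ey hx hy J' hc' hl' hr'
        rw [← hspan]
        exact TwoSidedIdeal.subset_span ha
      rwa [hJcorner a ha] at this
    · intro ha
      have : ex * a * ey ∈ J := by
        apply corner_span_mem A ex ey hx hy J hJcorner hJleft hJright
        rw [hspan]
        exact TwoSidedIdeal.subset_span ha
      rwa [hc' a ha] at this
end

section
/- Let A be a ring with idempotents e_x, e_y. The map I ↦ e_x I e_y from the lattice of two-sided ideals of A to the lattice of (e_x A e_x, e_y A e_y)-subbimodules of e_x A e_y is a surjective lattice homomorphism: it preserves inclusions, sums (joins) and intersections (meets), and every subbimodule is of the form e_x I e_y for some two-sided ideal I. -/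
/-- The map `I ↦ e_x I e_y` from two-sided ideals of `A` to subbimodules of `e_x A e_y` is a
surjective lattice homomorphism: it is monotone, preserves joins (sums) and meets
(intersections), its values are subbimodules, and every subbimodule arises this way. -/
theorem corner_map_surjective_lattice_hom
    (A : Type*) [Ring A] (ex ey : A)
    (hx : ex * ex = ex) (hy : ey * ey = ey)
    (F : TwoSidedIdeal A → AddSubgroup A)
    (hF : ∀ I, F I = AddSubgroup.map
      (AddMonoidHom.mk' (fun x => ex * x * ey)
        (fun a b => by simp only [mul_add, add_mul]))
      I.asIdeal.toAddSubgroup) :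
    Monotone F ∧
    (∀ I I' : TwoSidedIdeal A, F (I ⊔ I') = F I ⊔ F I') ∧
    (∀ I I' : TwoSidedIdeal A, F (I ⊓ I') = F I ⊓ F I') ∧
    (∀ I : TwoSidedIdeal A,
      (∀ a ∈ F I, ex * a * ey = a) ∧
      (∀ b : A, ∀ a ∈ F I, (ex * b * ex) * a ∈ F I) ∧
      (∀ b : A, ∀ a ∈ F I, a * (ey * b * ey) ∈ F I)) ∧
    (∀ J : AddSubgroup A,
      (∀ a ∈ J, ex * a * ey = a) →
      (∀ b : A, ∀ a ∈ J, (ex * b * ex) * a ∈ J) →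
      (∀ b : A, ∀ a ∈ J, a * (ey * b * ey) ∈ J) →
      ∃ I : TwoSidedIdeal A, F I = J) := by
  have memF : ∀ (I : TwoSidedIdeal A) (a : A),
      a ∈ F I ↔ ∃ z, z ∈ I ∧ ex * z * ey = a := by
    intro I a
    rw [hF I]
    simp [AddSubgroup.mem_map, TwoSidedIdeal.mem_asIdeal]
  have hx' : ∀ t : A, ex * (ex * t) = ex * t := fun t => by rw [← mul_assoc, hx]
  have hy' : ∀ t : A, ey * (ey * t) = ey * t := fun t => by rw [← mul_assoc, hy]
  have key : ∀ z : A, ex * (ex * z * ey) * ey = ex * z * ey := by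
    intro z
    simp only [mul_assoc, hx, hy, hx', hy']
  refine ⟨?_, ?_, ?_, ?_, ?_⟩
  · -- Monotone
    intro I I' h a ha
    rw [memF] at ha ⊢
    obtain ⟨z, hz, rfl⟩ := ha
    exact ⟨z, h hz, rfl⟩
  · -- joins
    intro I I'
    ext a
    rw [memF, AddSubgroup.mem_sup]
    constructor
    · rintro ⟨z, hz, rfl⟩
      rw [TwoSidedIdeal.mem_sup] at hz
      obtain ⟨y, hy', z', hz', rfl⟩ := hz
      exact ⟨ex * y * ey, (memF _ _).2 ⟨y, hy', rfl⟩,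
        ex * z' * ey, (memF _ _).2 ⟨z', hz', rfl⟩, by rw [mul_add, add_mul]⟩
    · rintro ⟨b, hb, c, hc, rfl⟩
      rw [memF] at hb hc
      obtain ⟨y, hy', rfl⟩ := hb
      obtain ⟨z, hz', rfl⟩ := hc
      exact ⟨y + z, TwoSidedIdeal.mem_sup.2 ⟨y, hy', z, hz', rfl⟩,
        by rw [mul_add, add_mul]⟩
  · -- meets
    intro I I'
    ext a
    rw [memF, AddSubgroup.mem_inf]
    constructor
    · rintro ⟨z, hz, rfl⟩
      rw [TwoSidedIdeal.mem_inf] at hz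
      exact ⟨(memF _ _).2 ⟨z, hz.1, rfl⟩, (memF _ _).2 ⟨z, hz.2, rfl⟩⟩
    · rintro ⟨h1, h2⟩
      rw [memF] at h1 h2
      obtain ⟨z, hz, rfl⟩ := h1
      obtain ⟨z', hz', hzz⟩ := h2
      refine ⟨ex * z * ey, (TwoSidedIdeal.mem_inf A).2
        ⟨I.mul_mem_right _ _ (I.mul_mem_left _ _ hz),
         ?_⟩, key z⟩
      rw [← hzz]
      exact I'.mul_mem_right _ _ (I'.mul_mem_left _ _ hz')
  · -- subbimodule properties
    intro I
    refine ⟨?_, ?_, ?_⟩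
    · intro a ha
      rw [memF] at ha
      obtain ⟨z, hz, rfl⟩ := ha
      exact key z
    · intro b a ha
      rw [memF] at ha ⊢
      obtain ⟨z, hz, rfl⟩ := ha
      refine ⟨b * ex * z, I.mul_mem_left _ _ hz, ?_⟩
      simp only [mul_assoc, hx, hy, hx', hy']
    · intro b a ha
      rw [memF] at ha ⊢
      obtain ⟨z, hz, rfl⟩ := ha
      refine ⟨z * ey * b, I.mul_mem_right _ _ (I.mul_mem_right _ _ hz), ?_⟩
      simp only [mul_assoc, hx, hy, hx', hy']
  · -- surjectivity
    intro J hJ1 hJ2 hJ3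
    refine ⟨TwoSidedIdeal.span (J : Set A), ?_⟩
    ext a
    rw [memF]
    constructor
    · rintro ⟨z, hz, rfl⟩
      rw [TwoSidedIdeal.mem_span_iff_mem_addSubgroup_closure] at hz
      -- show: for all z in the closure, ex * z * ey ∈ J
      induction hz using AddSubgroup.closure_induction with
      | mem w hw =>
        obtain ⟨-, ⟨r, -, j, hj, rfl⟩, r', -, rfl⟩ := hw
        have h1 : (ex * r * ex) * j ∈ J := hJ2 r j hj
        have h2 : ((ex * r * ex) * j) * (ey * r' * ey) ∈ J := hJ3 r' _ h1
        have : ex * (r * j * r') * ey = ((ex * r * ex) * j) * (ey * r' * ey) := by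
          have hj' : ex * j * ey = j := hJ1 j hj
          calc ex * (r * j * r') * ey
              = ex * (r * (ex * j * ey) * r') * ey := by rw [hj']
            _ = ((ex * r * ex) * j) * (ey * r' * ey) := by
              simp only [mul_assoc, hx, hy, hx', hy']
        rw [this]
        exact h2
      | zero => simpa using J.zero_mem
      | add x y hxm hym ihx ihy =>
        have : ex * (x + y) * ey = ex * x * ey + ex * y * ey := by
          rw [mul_add, add_mul]
        rw [this]
        exact J.add_mem ihx ihy
      | neg x hxm ihx =>
        have : ex * (-x) * ey = -(ex * x * ey) := by simp
        rw [this]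
        exact J.neg_mem ihx
    · intro ha
      exact ⟨a, TwoSidedIdeal.subset_span ha, hJ1 a ha⟩
end

section
/- Let A be a finite-dimensional algebra over a field k with a complete set of pairwise orthogonal idempotents e_1, ..., e_n. Then the lattice of two-sided ideals of A is distributive if and only if for all i, j the lattice of (e_i A e_i, e_j A e_j)-subbimodules of e_i A e_j is distributive. -/
section Aux

variable {A : Type*} [Ring A]

private lemma fix_left {u a v : A} (hu : u * u = u) (h : u * a * v = a) : u * a = a := by
  rw [← h, ← mul_assoc, ← mul_assoc, hu]

private lemma fix_right {u a v : A} (hv : v * v = v) (h : u * a * v = a) : a * v = a := by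
  rw [← h, mul_assoc, hv]

/-- The two-sided ideal attached to an additive subgroup `M`, used to transfer distributivity. -/
private def auxIdeal (u v : A) (M : AddSubgroup A) : TwoSidedIdeal A :=
  TwoSidedIdeal.mk' {x : A | ∀ a b : A, u * a * x * b * v ∈ M}
    (fun a b => by simpa using M.zero_mem)
    (fun {x y} hx hy a b => by
      have := M.add_mem (hx a b) (hy a b)
      simpa [mul_add, add_mul] using this)
    (fun {x} hx a b => by
      have := M.neg_mem (hx a b)
      simpa [mul_neg, neg_mul] using this)
    (fun {x y} hy a b => by simpa only [mul_assoc] using hy (a * x) b)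
    (fun {x y} hx a b => by simpa only [mul_assoc] using hx a (y * b))

private lemma mem_auxIdeal {u v : A} {M : AddSubgroup A} {x : A} :
    x ∈ auxIdeal u v M ↔ ∀ a b : A, u * a * x * b * v ∈ M :=
  TwoSidedIdeal.mem_mk' _ _ _ _ _ _ _

/-- The additive subgroup `{a ∈ I | u * a * v = a}` of a two-sided ideal `I`. -/
private def psiGrp (u v : A) (I : TwoSidedIdeal A) : AddSubgroup A where
  carrier := {a : A | a ∈ I ∧ u * a * v = a}
  zero_mem' := ⟨I.zero_mem, by simp⟩
  add_mem' := fun {a b} ha hb =>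
    ⟨I.add_mem ha.1 hb.1, by rw [mul_add, add_mul, ha.2, hb.2]⟩
  neg_mem' := fun {a} ha => ⟨I.neg_mem ha.1, by rw [mul_neg, neg_mul, ha.2]⟩

private lemma mem_psiGrp {u v : A} {I : TwoSidedIdeal A} {a : A} :
    a ∈ psiGrp u v I ↔ a ∈ I ∧ u * a * v = a := Iff.rfl

end Aux

/-- For a finite-dimensional algebra with a complete set of pairwise orthogonal idempotents,
the lattice of two-sided ideals is distributive iff for all `i, j` the lattice of
subbimodules of `e_i A e_j` is distributive. -/
theorem twoSidedIdeal_distributive_iff_subbimodules_distributive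
    (k A : Type*) [Field k] [Ring A] [Algebra k A] [FiniteDimensional k A]
    (n : ℕ) (e : Fin n → A)
    (hidem : ∀ i, e i * e i = e i)
    (horth : ∀ i j, i ≠ j → e i * e j = 0)
    (hsum : ∑ i, e i = 1) :
    (∀ I J K : TwoSidedIdeal A, I ⊓ (J ⊔ K) = (I ⊓ J) ⊔ (I ⊓ K)) ↔
    (∀ i j : Fin n, ∀ J₁ J₂ J₃ : AddSubgroup A,
      ((∀ a ∈ J₁, e i * a * e j = a) ∧
        (∀ b : A, ∀ a ∈ J₁, (e i * b * e i) * a ∈ J₁) ∧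
        (∀ b : A, ∀ a ∈ J₁, a * (e j * b * e j) ∈ J₁)) →
      ((∀ a ∈ J₂, e i * a * e j = a) ∧
        (∀ b : A, ∀ a ∈ J₂, (e i * b * e i) * a ∈ J₂) ∧
        (∀ b : A, ∀ a ∈ J₂, a * (e j * b * e j) ∈ J₂)) →
      ((∀ a ∈ J₃, e i * a * e j = a) ∧
        (∀ b : A, ∀ a ∈ J₃, (e i * b * e i) * a ∈ J₃) ∧
        (∀ b : A, ∀ a ∈ J₃, a * (e j * b * e j) ∈ J₃)) →
      J₁ ⊓ (J₂ ⊔ J₃) = (J₁ ⊓ J₂) ⊔ (J₁ ⊓ J₃)) := by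
  have hE : ∀ (i : Fin n) (x : A), e i * (e i * x) = e i * x := fun i x => by
    rw [← mul_assoc, hidem]
  constructor
  · -- ideals distributive → subbimodules distributive
    intro hdist i j J₁ J₂ J₃ h₁ h₂ h₃
    obtain ⟨h₁e, h₁l, h₁r⟩ := h₁
    obtain ⟨h₂e, h₂l, h₂r⟩ := h₂
    obtain ⟨h₃e, h₃l, h₃r⟩ := h₃
    -- spec : generic facts relating M and auxIdeal (e i) (e j) M
    have spec : ∀ (M : AddSubgroup A), (∀ a ∈ M, e i * a * e j = a) →
        (∀ b : A, ∀ a ∈ M, (e i * b * e i) * a ∈ M) →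
        (∀ b : A, ∀ a ∈ M, a * (e j * b * e j) ∈ M) →
        (∀ m ∈ M, m ∈ auxIdeal (e i) (e j) M) ∧
        (∀ x ∈ auxIdeal (e i) (e j) M, e i * x * e j ∈ M) := by
      intro M hMe hMl hMr
      constructor
      · intro m hm
        rw [mem_auxIdeal]
        intro a b
        have key : e i * a * m * b * e j = (e i * a * e i * m) * (e j * b * e j) := by
          conv_lhs => rw [← hMe m hm]
          simp only [mul_assoc, hE, hidem]
        rw [key]
        exact hMr b _ (hMl a m hm)
      · intro x hx
        rw [mem_auxIdeal] at hx
        have := hx 1 1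
        simpa using this
    have spec₁ := spec J₁ h₁e h₁l h₁r
    have spec₂ := spec J₂ h₂e h₂l h₂r
    have spec₃ := spec J₃ h₃e h₃l h₃r
    set I₁ := auxIdeal (e i) (e j) J₁
    set I₂ := auxIdeal (e i) (e j) J₂
    set I₃ := auxIdeal (e i) (e j) J₃
    apply le_antisymm
    · intro x hx
      rw [AddSubgroup.mem_inf] at hx
      obtain ⟨hx1, hx23⟩ := hx
      have hxI : x ∈ I₁ ⊓ (I₂ ⊔ I₃) := by
        rw [TwoSidedIdeal.mem_inf]
        refine ⟨spec₁.1 x hx1, ?_⟩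
        rw [AddSubgroup.mem_sup] at hx23
        obtain ⟨y, hy, z, hz, rfl⟩ := hx23
        exact (I₂ ⊔ I₃).add_mem (TwoSidedIdeal.mem_sup_left (spec₂.1 y hy))
          (TwoSidedIdeal.mem_sup_right (spec₃.1 z hz))
      rw [hdist I₁ I₂ I₃, TwoSidedIdeal.mem_sup] at hxI
      obtain ⟨u, hu, v, hv, huv⟩ := hxI
      rw [TwoSidedIdeal.mem_inf] at hu hv
      rw [AddSubgroup.mem_sup]
      refine ⟨e i * u * e j, ?_, e i * v * e j, ?_, ?_⟩
      · rw [AddSubgroup.mem_inf]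
        exact ⟨spec₁.2 u hu.1, spec₂.2 u hu.2⟩
      · rw [AddSubgroup.mem_inf]
        exact ⟨spec₁.2 v hv.1, spec₃.2 v hv.2⟩
      · have : e i * u * e j + e i * v * e j = e i * (u + v) * e j := by
          rw [mul_add, add_mul]
        rw [this, huv]
        exact h₁e x hx1
    · exact sup_le (le_inf inf_le_left (inf_le_right.trans le_sup_left))
        (le_inf inf_le_left (inf_le_right.trans le_sup_right))
  · -- subbimodules distributive → ideals distributive
    intro h I J K
    apply le_antisymm
    · intro x hx
      rw [TwoSidedIdeal.mem_inf] at hx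
      obtain ⟨hxI, hxJK⟩ := hx
      have hxrep : x = ∑ p, ∑ q, e p * x * e q := by
        conv_lhs => rw [← one_mul x, ← mul_one (1 * x), ← hsum]
        simp only [Finset.sum_mul, Finset.mul_sum]
        rw [Finset.sum_comm]
      -- each diagonal component lies in the RHS
      have key : ∀ p q : Fin n, e p * x * e q ∈ (I ⊓ J) ⊔ (I ⊓ K) := by
        intro p q
        -- set up the three subbimodules
        have cond : ∀ L : TwoSidedIdeal A,
            (∀ a ∈ psiGrp (e p) (e q) L, e p * a * e q = a) ∧
            (∀ b : A, ∀ a ∈ psiGrp (e p) (e q) L, (e p * b * e p) * a ∈ psiGrp (e p) (e q) L) ∧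
            (∀ b : A, ∀ a ∈ psiGrp (e p) (e q) L, a * (e q * b * e q) ∈ psiGrp (e p) (e q) L) := by
          intro L
          refine ⟨fun a ha => ha.2, ?_, ?_⟩
          · intro b a ha
            obtain ⟨haL, hae⟩ := ha
            have hia : ∀ y : A, e p * (a * y) = a * y := fun y => by
              rw [← mul_assoc, fix_left (hidem p) hae]
            have haj : a * e q = a := fix_right (hidem q) hae
            refine ⟨L.mul_mem_left _ _ haL, ?_⟩
            have hea : e p * a = a := fix_left (hidem p) hae
            simp only [mul_assoc, hE, haj, hea]
          · intro b a ha
            obtain ⟨haL, hae⟩ := ha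
            have hia : ∀ y : A, e p * (a * y) = a * y := fun y => by
              rw [← mul_assoc, fix_left (hidem p) hae]
            refine ⟨L.mul_mem_right _ _ haL, ?_⟩
            simp only [mul_assoc, hidem, hia]
        have heq := h p q (psiGrp (e p) (e q) I) (psiGrp (e p) (e q) J) (psiGrp (e p) (e q) K)
          (cond I) (cond J) (cond K)
        have hmem_psi : ∀ (L : TwoSidedIdeal A) (y : A), y ∈ L →
            e p * y * e q ∈ psiGrp (e p) (e q) L := by
          intro L y hy
          refine ⟨L.mul_mem_right _ _ (L.mul_mem_left _ _ hy), ?_⟩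
          simp only [mul_assoc, hE, hidem]
        have hx_mem : e p * x * e q ∈ psiGrp (e p) (e q) I ⊓
            (psiGrp (e p) (e q) J ⊔ psiGrp (e p) (e q) K) := by
          rw [AddSubgroup.mem_inf]
          refine ⟨hmem_psi I x hxI, ?_⟩
          rw [TwoSidedIdeal.mem_sup] at hxJK
          obtain ⟨y, hy, z, hz, hyz⟩ := hxJK
          rw [AddSubgroup.mem_sup]
          refine ⟨e p * y * e q, hmem_psi J y hy, e p * z * e q, hmem_psi K z hz, ?_⟩
          rw [show e p * y * e q + e p * z * e q = e p * (y + z) * e q by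
            rw [mul_add, add_mul], hyz]
        rw [heq, AddSubgroup.mem_sup] at hx_mem
        obtain ⟨u, hu, v, hv, huv⟩ := hx_mem
        rw [AddSubgroup.mem_inf] at hu hv
        rw [TwoSidedIdeal.mem_sup]
        exact ⟨u, TwoSidedIdeal.mem_inf (R := A).mpr ⟨hu.1.1, hu.2.1⟩,
          v, TwoSidedIdeal.mem_inf (R := A).mpr ⟨hv.1.1, hv.2.1⟩, huv⟩
      rw [hxrep]
      exact sum_mem fun p _ => sum_mem fun q _ => key p q
    · exact sup_le (le_inf inf_le_left (inf_le_right.trans le_sup_left))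
        (le_inf inf_le_left (inf_le_right.trans le_sup_right))
end

section
/- Let A be a ring and e ∈ A an idempotent. If the lattice of two-sided ideals of A is distributive, then the lattice of two-sided ideals of the corner ring eAe is distributive. -/
open TwoSidedIdeal in
/-- The two-sided ideal of `A` generated by an additive subgroup `J`. -/
private def cornerExt {A : Type*} [Ring A] (J : AddSubgroup A) : TwoSidedIdeal A :=
  TwoSidedIdeal.mk'
    (AddSubgroup.closure {z | ∃ x y a : A, a ∈ J ∧ z = x * a * y} : Set A)
    (AddSubgroup.zero_mem _)
    (fun h1 h2 => add_mem h1 h2)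
    (fun h => neg_mem h)
    (fun {r x} hx => by
      refine AddSubgroup.closure_induction
        (fun z hz => ?_) (by simpa using AddSubgroup.zero_mem _)
        (fun u v _ _ hu hv => by simpa [mul_add] using add_mem hu hv)
        (fun u _ hu => by simpa [mul_neg] using neg_mem hu) hx
      obtain ⟨x', y', a, ha, rfl⟩ := hz
      refine AddSubgroup.subset_closure ⟨r * x', y', a, ha, ?_⟩
      simp only [mul_assoc])
    (fun {r x} hx => by
      refine AddSubgroup.closure_induction
        (fun z hz => ?_) (by simpa using AddSubgroup.zero_mem _)
        (fun u v _ _ hu hv => by simpa [add_mul] using add_mem hu hv)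
        (fun u _ hu => by simpa [neg_mul] using neg_mem hu) hx
      obtain ⟨x', y', a, ha, rfl⟩ := hz
      refine AddSubgroup.subset_closure ⟨x', y' * x, a, ha, ?_⟩
      simp only [mul_assoc])

private lemma mem_cornerExt {A : Type*} [Ring A] {J : AddSubgroup A} {a : A} (ha : a ∈ J) :
    a ∈ cornerExt J := by
  rw [cornerExt, TwoSidedIdeal.mem_mk']
  exact AddSubgroup.subset_closure ⟨1, 1, a, ha, by noncomm_ring⟩

private lemma corner_of_mem_cornerExt {A : Type*} [Ring A] {e : A} {J : AddSubgroup A}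
    (hJ : (∀ a ∈ J, e * a * e = a) ∧
      (∀ b : A, ∀ a ∈ J, (e * b * e) * a ∈ J) ∧
      (∀ b : A, ∀ a ∈ J, a * (e * b * e) ∈ J))
    {x : A} (hx : x ∈ cornerExt J) : e * x * e ∈ J := by
  rw [cornerExt, TwoSidedIdeal.mem_mk'] at hx
  refine AddSubgroup.closure_induction (fun z hz => ?_)
    (by simpa using zero_mem J)
    (fun u v _ _ hu hv => by simpa [mul_add, add_mul] using add_mem hu hv)
    (fun u _ hu => by simpa [mul_neg, neg_mul] using neg_mem hu) hx
  obtain ⟨x', y', a, ha, rfl⟩ := hz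
  have h1 : e * (x' * a * y') * e = (e * x' * e) * a * (e * y' * e) := by
    have ha' := hJ.1 a ha
    conv_lhs => rw [← ha']
    simp only [mul_assoc]
  rw [h1]
  exact hJ.2.2 y' _ (hJ.2.1 x' a ha)

/-- If the lattice of two-sided ideals of `A` is distributive, then so is the lattice of
two-sided ideals of the corner ring `eAe` (encoded as additive subgroups of `A` contained in
`eAe` and closed under multiplication by elements of `eAe`). -/
theorem corner_ring_ideal_lattice_distributive
    (A : Type*) [Ring A] (e : A) (he : e * e = e)
    (hdist : ∀ I J K : TwoSidedIdeal A, I ⊓ (J ⊔ K) = (I ⊓ J) ⊔ (I ⊓ K)) :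
    ∀ J₁ J₂ J₃ : AddSubgroup A,
      ((∀ a ∈ J₁, e * a * e = a) ∧
        (∀ b : A, ∀ a ∈ J₁, (e * b * e) * a ∈ J₁) ∧
        (∀ b : A, ∀ a ∈ J₁, a * (e * b * e) ∈ J₁)) →
      ((∀ a ∈ J₂, e * a * e = a) ∧
        (∀ b : A, ∀ a ∈ J₂, (e * b * e) * a ∈ J₂) ∧
        (∀ b : A, ∀ a ∈ J₂, a * (e * b * e) ∈ J₂)) →
      ((∀ a ∈ J₃, e * a * e = a) ∧
        (∀ b : A, ∀ a ∈ J₃, (e * b * e) * a ∈ J₃) ∧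
        (∀ b : A, ∀ a ∈ J₃, a * (e * b * e) ∈ J₃)) →
      J₁ ⊓ (J₂ ⊔ J₃) = (J₁ ⊓ J₂) ⊔ (J₁ ⊓ J₃) := by
  intro J₁ J₂ J₃ h₁ h₂ h₃
  refine le_antisymm ?_ (sup_le (le_inf inf_le_left (inf_le_right.trans le_sup_left))
    (le_inf inf_le_left (inf_le_right.trans le_sup_right)))
  intro x hx
  rw [AddSubgroup.mem_inf] at hx
  obtain ⟨hx1, hx23⟩ := hx
  -- move to two-sided ideals of A
  have hxI : x ∈ (cornerExt J₁ ⊓ cornerExt J₂) ⊔ (cornerExt J₁ ⊓ cornerExt J₃) := by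
    rw [← hdist, TwoSidedIdeal.mem_inf]
    refine ⟨mem_cornerExt hx1, ?_⟩
    rw [AddSubgroup.mem_sup] at hx23
    obtain ⟨y, hy, z, hz, rfl⟩ := hx23
    exact TwoSidedIdeal.mem_sup.2
      ⟨y, mem_cornerExt hy, z, mem_cornerExt hz, rfl⟩
  rw [TwoSidedIdeal.mem_sup] at hxI
  obtain ⟨u, hu, v, hv, huv⟩ := hxI
  rw [TwoSidedIdeal.mem_inf] at hu hv
  rw [AddSubgroup.mem_sup]
  refine ⟨e * u * e, ⟨corner_of_mem_cornerExt h₁ hu.1, corner_of_mem_cornerExt h₂ hu.2⟩,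
    e * v * e, ⟨corner_of_mem_cornerExt h₁ hv.1, corner_of_mem_cornerExt h₃ hv.2⟩, ?_⟩
  have : e * u * e + e * v * e = e * (u + v) * e := by noncomm_ring
  rw [this, huv, h₁.1 x hx1]
end

section
/- Let k be an infinite field and A a finite-dimensional k-algebra with complete orthogonal idempotents e_1, ..., e_n such that A/rad A ≅ k^n (A is split basic). If the lattice of two-sided ideals of A is not distributive, then A has infinitely many two-sided ideals. -/
section Aux

variable {k A : Type*} [Field k] [Ring A] [Algebra k A]

private lemma tsi_smul_mem (I : TwoSidedIdeal A) (μ : k) {x : A} (hx : x ∈ I) :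
    μ • x ∈ I := by
  rw [Algebra.smul_def]; exact I.mul_mem_left _ _ hx

/-- The ideal of "lines of slope μ". -/
private def lineIdeal (J K c : TwoSidedIdeal A) (μ : k) : TwoSidedIdeal A :=
  TwoSidedIdeal.mk'
    {x | ∃ p q, p ∈ J ∧ q ∈ K ∧ p + q ∈ c ∧ p + μ • q = x}
    ⟨0, 0, J.zero_mem, K.zero_mem, by simpa using c.zero_mem, by simp⟩
    (by rintro _ _ ⟨p, q, hp, hq, hpq, rfl⟩ ⟨p', q', hp', hq', hpq', rfl⟩
        exact ⟨p + p', q + q', J.add_mem hp hp', K.add_mem hq hq',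
          by simpa [add_add_add_comm] using c.add_mem hpq hpq',
          by rw [smul_add]; abel⟩)
    (by rintro _ ⟨p, q, hp, hq, hpq, rfl⟩
        exact ⟨-p, -q, J.neg_mem hp, K.neg_mem hq,
          by have := c.neg_mem hpq
             rwa [show -(p + q) = -p + -q by abel] at this,
          by rw [smul_neg]; abel⟩)
    (by rintro r _ ⟨p, q, hp, hq, hpq, rfl⟩
        exact ⟨r * p, r * q, J.mul_mem_left _ _ hp, K.mul_mem_left _ _ hq,
          by simpa [mul_add] using c.mul_mem_left r _ hpq,
          by rw [mul_add, mul_smul_comm]⟩)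
    (by rintro _ r ⟨p, q, hp, hq, hpq, rfl⟩
        exact ⟨p * r, q * r, J.mul_mem_right _ _ hp, K.mul_mem_right _ _ hq,
          by simpa [add_mul] using c.mul_mem_right _ r hpq,
          by rw [add_mul, smul_mul_assoc]⟩)

private lemma mem_lineIdeal {J K c : TwoSidedIdeal A} {μ : k} {x : A} :
    x ∈ lineIdeal J K c μ ↔ ∃ p q, p ∈ J ∧ q ∈ K ∧ p + q ∈ c ∧ p + μ • q = x :=
  TwoSidedIdeal.mem_mk' _ _ _ _ _ _ _

end Aux

/-- A finite-dimensional split basic algebra over an infinite field whose two-sided ideal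
lattice is not distributive has infinitely many two-sided ideals. -/
theorem infinite_twoSidedIdeals_of_not_distributive
    (k A : Type*) [Field k] [Infinite k] [Ring A] [Algebra k A] [FiniteDimensional k A]
    (n : ℕ) (e : Fin n → A)
    (hidem : ∀ i, e i * e i = e i)
    (horth : ∀ i j, i ≠ j → e i * e j = 0)
    (hsum : ∑ i, e i = 1)
    (φ : A →ₐ[k] (Fin n → k))
    (hφsurj : Function.Surjective φ)
    (hφker : RingHom.ker φ.toRingHom = Ideal.jacobson ⊥)
    (hφe : ∀ i, φ (e i) = Pi.single i 1)
    (hnd : ¬ ∀ I J K : TwoSidedIdeal A, I ⊓ (J ⊔ K) = (I ⊓ J) ⊔ (I ⊓ K)) :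
    Infinite (TwoSidedIdeal A) := by
  push_neg at hnd
  obtain ⟨I, J, K, hIJK⟩ := hnd
  set c : TwoSidedIdeal A := (I ⊓ (J ⊔ K)) ⊔ (J ⊓ K) with hc
  -- every element of c decomposes as p + q with p ∈ J, q ∈ K
  have hc1 : ∀ x ∈ c, ∃ p ∈ J, ∃ q ∈ K, p + q = x := by
    intro x hx
    have : c ≤ J ⊔ K := sup_le (inf_le_right.trans le_rfl) (le_trans inf_le_left le_sup_left)
    exact TwoSidedIdeal.mem_sup.mp (this hx)
  -- J ⊓ K ≤ c
  have hab : J ⊓ K ≤ c := le_sup_right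
  -- c is not ≤ (J ⊓ c) ⊔ (K ⊓ c)
  have hc3 : ¬ c ≤ (J ⊓ c) ⊔ (K ⊓ c) := by
    intro hle
    apply hIJK
    refine le_antisymm ?_ le_inf_sup
    intro x hx
    have hxc : x ∈ c := TwoSidedIdeal.mem_sup_left hx
    obtain ⟨y, hy, z, hz, hyz⟩ := TwoSidedIdeal.mem_sup.mp (hle hxc)
    rw [TwoSidedIdeal.mem_inf] at hy hz
    obtain ⟨y1, hy1, y2, hy2, hy12⟩ := TwoSidedIdeal.mem_sup.mp hy.2
    obtain ⟨z1, hz1, z2, hz2, hz12⟩ := TwoSidedIdeal.mem_sup.mp hz.2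
    rw [TwoSidedIdeal.mem_inf] at hy1 hz1 hy2 hz2 hx
    -- y1 ∈ I ⊓ J, z1 ∈ I ⊓ K
    have hy1J : y1 ∈ J := by
      have : y1 = y - y2 := by rw [← hy12]; abel
      rw [this]; exact J.sub_mem hy.1 hy2.1
    have hz1K : z1 ∈ K := by
      have : z1 = z - z2 := by rw [← hz12]; abel
      rw [this]; exact K.sub_mem hz.1 hz2.2
    -- w := y2 + z2 ∈ I ⊓ J
    have hwI : y2 + z2 ∈ I := by
      have : y2 + z2 = x - y1 - z1 := by rw [← hyz, ← hy12, ← hz12]; abel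
      rw [this]; exact I.sub_mem (I.sub_mem hx.1 hy1.1) hz1.1
    have hwJ : y2 + z2 ∈ J := J.add_mem hy2.1 hz2.1
    have hx' : x = (y1 + (y2 + z2)) + z1 := by rw [← hyz, ← hy12, ← hz12]; abel
    rw [hx']
    refine TwoSidedIdeal.mem_sup.mpr ⟨y1 + (y2 + z2), ?_, z1, ?_, rfl⟩ <;>
      rw [TwoSidedIdeal.mem_inf]
    · exact ⟨I.add_mem hy1.1 hwI, J.add_mem hy1J hwJ⟩
    · exact ⟨hz1.1, hz1K⟩
  -- the map μ ↦ lineIdeal J K c μ is injective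
  have hinj : Function.Injective (fun μ : k => lineIdeal J K c μ) := by
    intro μ ν hμν
    by_contra hne
    simp only at hμν
    apply hc3
    intro x hx
    obtain ⟨p, hp, q, hq, hpq⟩ := hc1 x hx
    have hxm : p + μ • q ∈ lineIdeal (k := k) J K c μ :=
      mem_lineIdeal.mpr ⟨p, q, hp, hq, by rwa [hpq], rfl⟩
    rw [hμν] at hxm
    obtain ⟨p', q', hp', hq', hpq', heq⟩ := mem_lineIdeal.mp hxm
    -- d := p - p' ∈ J ⊓ K ≤ c
    have hd : p - p' ∈ c := by
      apply hab
      rw [TwoSidedIdeal.mem_inf]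
      refine ⟨J.sub_mem hp hp', ?_⟩
      have : p - p' = ν • q' - μ • q := by
        rw [sub_eq_sub_iff_add_eq_add, ← heq]; abel
      rw [this]
      exact K.sub_mem (tsi_smul_mem K ν hq') (tsi_smul_mem K μ hq)
    -- q' - q ∈ c
    have hq'q : q' - q ∈ c := by
      have h1 : (p' + q') - x ∈ c := c.sub_mem hpq' hx
      have : q' - q = ((p' + q') - x) + (p - p') := by rw [← hpq]; abel
      rw [this]
      exact c.add_mem h1 hd
    -- (ν - μ) • q ∈ c
    have hsq : (ν - μ) • q ∈ c := by
      have : (ν - μ) • q = (p - p') - ν • (q' - q) := by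
        rw [sub_smul, smul_sub]
        have h2 : p - p' = ν • q' - μ • q := by
          rw [sub_eq_sub_iff_add_eq_add, ← heq]; abel
        rw [h2]; abel
      rw [this]
      exact c.sub_mem hd (tsi_smul_mem c ν hq'q)
    have hνμ : ν - μ ≠ 0 := sub_ne_zero.mpr (Ne.symm hne)
    have hqc : q ∈ c := by
      have := tsi_smul_mem c (ν - μ)⁻¹ hsq
      rwa [inv_smul_smul₀ hνμ] at this
    have hpc : p ∈ c := by
      have : p = x - q := by rw [← hpq]; abel
      rw [this]; exact c.sub_mem hx hqc
    rw [← hpq]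
    refine TwoSidedIdeal.mem_sup.mpr ⟨p, ?_, q, ?_, rfl⟩ <;>
      rw [TwoSidedIdeal.mem_inf]
    · exact ⟨hp, hpc⟩
    · exact ⟨hq, hqc⟩
  exact Infinite.of_injective _ hinj
end

section
/- Let A be a finite-dimensional k-algebra with orthogonal idempotents e_x, e_y (x ≠ y) such that the local rings e_x A e_x and e_y A e_y are uniserial. If dim_k (rad^i e_x A e_y / rad^{i+1} e_x A e_y) ≤ 1 for i = 0 and i = 1, then the bimodule e_x A e_y is uniserial; moreover it is then uniserial (in fact cyclic) already as a left e_x A e_x-module or as a right e_y A e_y-module. -/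
open Submodule

namespace CBU

variable {k A : Type*} [Field k] [Ring A] [Algebra k A]

/-- The corner subspace `{a | e * a * f = a}`. -/
def corner (k : Type*) {A : Type*} [Field k] [Ring A] [Algebra k A] (e f : A) :
    Submodule k A where
  carrier := {a | e * a * f = a}
  add_mem' := by
    intro a b ha hb
    simp only [Set.mem_setOf_eq] at *
    rw [mul_add, add_mul, ha, hb]
  zero_mem' := by simp
  smul_mem' := by
    intro c a ha
    simp only [Set.mem_setOf_eq] at *
    rw [mul_smul_comm, smul_mul_assoc, ha]

@[simp] lemma mem_corner {e f a : A} : a ∈ corner k e f ↔ e * a * f = a := Iff.rfl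

lemma eabs {e f u : A} (he : e*e = e) (hu : e*u*f = u) : e*u = u := by
  conv_lhs => rw [← hu]
  rw [← mul_assoc, ← mul_assoc, he, hu]

lemma fabs {e f u : A} (hf : f*f = f) (hu : e*u*f = u) : u*f = u := by
  conv_lhs => rw [← hu]
  rw [mul_assoc, hf, hu]

lemma corner_mul {e f g u v : A} (he : e*e = e) (hf : f*f = f) (hg : g*g = g)
    (hu : e*u*f = u) (hv : f*v*g = v) : e*(u*v)*g = u*v := by
  rw [← mul_assoc e u v, eabs he hu, mul_assoc, fabs hg hv]

lemma id_left {e f u m : A} (he : e*e = e) (hf : f*f = f) (hu : e*u*f = u) (m' := m) :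
    e*(m*u)*f = e*m*e*u := by
  have h1 : e*u = u := eabs he hu
  have h2 : u*f = u := fabs hf hu
  simp only [mul_assoc]
  rw [h2, h1]

lemma id_right {e f u m : A} (he : e*e = e) (hf : f*f = f) (hu : e*u*f = u) :
    e*(u*m)*f = u*(f*m*f) := by
  have h1 : e*u = u := eabs he hu
  have h2 : u*f = u := fabs hf hu
  simp only [mul_assoc]
  rw [← mul_assoc e u, h1, ← mul_assoc u f, h2]

lemma corner_elem {e f : A} (he : e*e = e) (hf : f*f = f) (m : A) :
    e*(e*m*f)*f = e*m*f := by
  simp only [mul_assoc, hf]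
  rw [← mul_assoc e e, he]

lemma mul_le_corner {e f g : A} (he : e*e = e) (hf : f*f = f) (hg : g*g = g)
    {X Y : Submodule k A} (hX : X ≤ corner k e f) (hY : Y ≤ corner k f g) :
    X * Y ≤ corner k e g :=
  Submodule.mul_le.2 fun x hx y hy => corner_mul he hf hg (hX hx) (hY hy)

end CBU
open Submodule
namespace CBU

variable {k A : Type*} [Field k] [Ring A] [Algebra k A]

lemma jac_mul_right {N : Ideal A} (hN : N = Ideal.jacobson ⊥) {m : A} (hm : m ∈ N) (c : A) :
    m * c ∈ N := by
  subst hN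
  exact (Ideal.jacobson ⊥).mul_mem_right c hm

lemma jac_one_sub_unit {N : Ideal A} (hN : N = Ideal.jacobson ⊥) {u : A} (hu : u ∈ N) :
    ∃ v, v * (1 - u) = 1 := by
  by_cases h : Ideal.span {1 - u} = ⊤
  · have h1 : (1 : A) ∈ Ideal.span {1 - u} := h ▸ Submodule.mem_top
    obtain ⟨v, hv⟩ := Submodule.mem_span_singleton.1 h1
    exact ⟨v, by simpa [smul_eq_mul] using hv⟩
  · obtain ⟨M, hM, hle⟩ := Ideal.exists_le_maximal _ h
    have hu' : u ∈ M := by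
      subst hN
      exact (sInf_le ⟨bot_le, hM⟩ : Ideal.jacobson ⊥ ≤ M) hu
    exfalso
    have h1 : (1 - u) ∈ M := hle (Ideal.subset_span rfl)
    have : (1 : A) ∈ M := by
      have := M.add_mem h1 hu'
      simpa using this
    exact hM.ne_top ((Ideal.eq_top_iff_one M).2 this)

section Nprops

variable (N : Ideal A)

/-- restriction of scalars of the radical -/
abbrev Nk (k : Type*) [Field k] [Algebra k A] (N : Ideal A) : Submodule k A :=
  N.restrictScalars k

lemma Nk_mem {a : A} : a ∈ Nk k N ↔ a ∈ N := Iff.rfl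

lemma Nk_left_absorb {a x : A} (hx : x ∈ Nk k N) : a * x ∈ Nk k N := by
  simpa [Nk_mem] using N.smul_mem a hx

lemma Nk_right_absorb (hN : N = Ideal.jacobson ⊥) {x : A} (hx : x ∈ Nk k N) (a : A) :
    x * a ∈ Nk k N := jac_mul_right hN hx a

lemma Nk_mul_le : Nk k N * Nk k N ≤ Nk k N :=
  Submodule.mul_le.2 fun _ _ y hy => Nk_left_absorb N (x := y) hy

lemma Nk_pow_mul_le : ∀ i, Nk k N ^ (i+1) * Nk k N ≤ Nk k N ^ (i+1) := by
  intro i; induction i with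
  | zero => simpa [pow_one] using Nk_mul_le (k := k) N
  | succ i ih =>
      have : Nk k N ^ (i+2) = Nk k N ^ (i+1) * Nk k N := pow_succ _ _
      rw [this]
      calc Nk k N ^ (i + 1) * Nk k N * Nk k N ≤ Nk k N ^ (i+1) * Nk k N :=
            (mul_le_mul_left ih _)
        _ = Nk k N ^ (i+2) := (pow_succ _ _).symm

lemma Nk_pow_antitone : ∀ i j, i ≤ j → Nk k N ^ (j+1) ≤ Nk k N ^ (i+1) := by
  intro i j hij
  induction j with
  | zero => simpa [Nat.le_zero.1 hij]
  | succ j ih =>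
      rcases Nat.lt_or_ge i (j+1) with h | h
      · have h' := ih (Nat.lt_succ_iff.1 h)
        calc Nk k N ^ (j+2) = Nk k N ^ (j+1) * Nk k N := pow_succ _ _
          _ ≤ Nk k N ^ (j+1) := Nk_pow_mul_le N j
          _ ≤ Nk k N ^ (i+1) := h'
      · have : i = j + 1 := le_antisymm hij h
        simp [this]

lemma Nk_pow_A_closed : ∀ (i) (a x : A), x ∈ Nk k N ^ (i+1) → a * x ∈ Nk k N ^ (i+1) := by
  intro i
  induction i with
  | zero =>
      intro a x hx
      simpa [pow_one] using Nk_left_absorb (k := k) N (a := a) (by simpa [pow_one] using hx)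
  | succ i ih =>
      intro a x hx
      rw [pow_succ'] at hx ⊢
      refine Submodule.mul_induction_on hx (fun u hu y hy => ?_) (fun z w hz hw => ?_)
      · have : a * (u * y) = (a * u) * y := by rw [mul_assoc]
        rw [this]
        exact Submodule.mul_mem_mul (Nk_left_absorb N hu) hy
      · rw [mul_add]; exact Submodule.add_mem _ hz hw

end Nprops

end CBU
open Submodule
namespace CBU

variable {k A : Type*} [Field k] [Ring A] [Algebra k A]

lemma mul_iSup_le {ι : Sort*} (X : Submodule k A) (f : ι → Submodule k A) (T : Submodule k A)
    (h : ∀ i, X * f i ≤ T) : X * (⨆ i, f i) ≤ T := by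
  refine Submodule.mul_le.2 fun x hx y hy => ?_
  refine Submodule.iSup_induction f (motive := fun y => x * y ∈ T) hy (fun i z hz => ?_) ?_ ?_
  · exact h i (Submodule.mul_mem_mul hx hz)
  · simp
  · intro a b ha hb; rw [mul_add]; exact T.add_mem ha hb

lemma iSup_mul_le {ι : Sort*} (X : Submodule k A) (f : ι → Submodule k A) (T : Submodule k A)
    (h : ∀ i, f i * X ≤ T) : (⨆ i, f i) * X ≤ T := by
  refine Submodule.mul_le.2 fun y hy x hx => ?_
  refine Submodule.iSup_induction f (motive := fun y => y * x ∈ T) hy (fun i z hz => ?_) ?_ ?_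
  · exact h i (Submodule.mul_mem_mul hz hx)
  · simp
  · intro a b ha hb; rw [add_mul]; exact T.add_mem ha hb

/-- extraction of a finite-sum representation from a finite sup of right-multiple images -/
lemma sup_repr (N'' : Submodule k A) :
    ∀ (s : Finset A) {y : A},
      y ∈ s.sup (fun x => Submodule.map (LinearMap.mulRight k x) N'') →
      ∃ g : A → A, (∀ x, g x ∈ N'') ∧ y = ∑ x ∈ s, g x * x := by
  classical
  intro s
  induction s using Finset.induction with
  | empty =>
      intro y hy
      rw [Finset.sup_empty] at hy
      exact ⟨0, by simp, by simpa using (Submodule.mem_bot k).1 hy⟩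
  | @insert a t ha ih =>
      intro y hy
      rw [Finset.sup_insert] at hy
      obtain ⟨z, hz, w, hw, rfl⟩ := Submodule.mem_sup.1 hy
      obtain ⟨u, hu, rfl⟩ := Submodule.mem_map.1 hz
      obtain ⟨g, hg, rfl⟩ := ih hw
      refine ⟨fun x => if x = a then u else g x, fun x => ?_, ?_⟩
      · by_cases hxa : x = a <;> simp [hxa, hu, hg x]
      · rw [Finset.sum_insert ha]
        simp only [LinearMap.mulRight_apply, if_pos rfl]
        congr 1
        refine Finset.sum_congr rfl fun x hx => ?_
        have : x ≠ a := fun hh => ha (hh ▸ hx)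
        simp [this]

lemma mul_spanA_le (N'' : Submodule k A) (hNr : ∀ u ∈ N'', ∀ a : A, u * a ∈ N'')
    (s : Finset A) :
    ∀ {u v : A}, u ∈ N'' → v ∈ Submodule.span A (↑s : Set A) →
      u * v ∈ s.sup (fun x => Submodule.map (LinearMap.mulRight k x) N'') := by
  classical
  intro u v hu hv
  induction hv using Submodule.span_induction generalizing u with
  | mem x hx =>
      exact Finset.le_sup (f := fun x => Submodule.map (LinearMap.mulRight k x) N'') hx
        (Submodule.mem_map.2 ⟨u, hu, by simp⟩)
  | zero => simp
  | add x y hx hy ihx ihy =>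
      rw [mul_add]; exact Submodule.add_mem _ (ihx hu) (ihy hu)
  | smul a x hx ihx =>
      have : u * (a • x) = (u * a) * x := by
        rw [smul_eq_mul, mul_assoc]
      rw [this]
      exact ihx (hNr u hu a)

end CBU
open Submodule
namespace CBU

variable {k A : Type*} [Field k] [Ring A] [Algebra k A]

lemma nak_aux [FiniteDimensional k A] {N : Ideal A} (hN : N = Ideal.jacobson ⊥)
    (P : Submodule k A) (hP : P ≤ Nk k N * P) :
    ∀ (n : ℕ) (s : Finset A), s.card = n → (↑s : Set A) ⊆ (P : Set A) →
      (P : Set A) ⊆ (Submodule.span A (↑s : Set A) : Set A) → P = ⊥ := by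
  classical
  intro n
  induction n with
  | zero =>
      intro s hcard _ hPs
      have hse : s = ∅ := Finset.card_eq_zero.1 hcard
      subst hse
      refine le_bot_iff.1 fun x hx => ?_
      have := hPs hx
      simpa using this
  | succ n ih =>
      intro s hcard hsP hPs
      obtain ⟨a, ha⟩ : s.Nonempty := Finset.card_pos.1 (by omega)
      have haP : a ∈ P := hsP ha
      have haNP : a ∈ Nk k N * P := hP haP
      have h2 : a ∈ s.sup (fun x => Submodule.map (LinearMap.mulRight k x) (Nk k N)) := by
        refine Submodule.mul_induction_on haNP (fun u hu v hv => ?_) (fun z w hz hw => ?_)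
        · exact mul_spanA_le (Nk k N) (fun u hu a => Nk_right_absorb N hN hu a) s hu (hPs hv)
        · exact Submodule.add_mem _ hz hw
      obtain ⟨g, hg, hrep⟩ := sup_repr (Nk k N) s h2
      have hsum : a = g a * a + ∑ x ∈ s.erase a, g x * x := by
        rw [← Finset.add_sum_erase s (fun x => g x * x) ha] at hrep
        exact hrep
      obtain ⟨v, hv⟩ := jac_one_sub_unit hN (hg a)
      have h3 : (1 - g a) * a = ∑ x ∈ s.erase a, g x * x := by
        rw [sub_mul, one_mul, sub_eq_iff_eq_add']
        exact hsum
      have key : a = v * (∑ x ∈ s.erase a, g x * x) := by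
        calc a = 1 * a := (one_mul a).symm
          _ = (v * (1 - g a)) * a := by rw [hv]
          _ = v * ((1 - g a) * a) := by rw [mul_assoc]
          _ = v * (∑ x ∈ s.erase a, g x * x) := by rw [h3]
      have hmem : a ∈ Submodule.span A (↑(s.erase a) : Set A) := by
        set Q := Submodule.span A (↑(s.erase a) : Set A) with hQ
        rw [key]
        have hsummem : (∑ x ∈ s.erase a, g x * x) ∈ Q := by
          refine Submodule.sum_mem _ fun x hx => ?_
          have hxmem : x ∈ Q :=
            Submodule.subset_span (by exact_mod_cast hx)
          simpa [smul_eq_mul] using Submodule.smul_mem _ (g x) hxmem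
        simpa [smul_eq_mul] using Submodule.smul_mem _ v hsummem
      have hss : Submodule.span A (↑s : Set A) ≤ Submodule.span A (↑(s.erase a) : Set A) := by
        conv_lhs => rw [← Finset.insert_erase ha]
        rw [Finset.coe_insert, Submodule.span_insert_eq_span hmem]
      refine ih (s.erase a) ?_ (fun x hx => hsP (Finset.erase_subset _ _ hx))
        (fun p hp => hss (hPs hp))
      rw [Finset.card_erase_of_mem ha, hcard]
      rfl

lemma exists_pow_bot [FiniteDimensional k A] {N : Ideal A} (hN : N = Ideal.jacobson ⊥) :
    ∃ n, (Nk k N) ^ (n + 1) = ⊥ := by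
  have hmono := Nk_pow_antitone (k := k) N
  let f : ℕ →o (Submodule k A)ᵒᵈ := ⟨fun i => (Nk k N) ^ (i+1), fun i j hij => hmono i j hij⟩
  obtain ⟨n, hn⟩ := IsArtinian.monotone_stabilizes f
  have h1 : (Nk k N) ^ (n+1) = (Nk k N) ^ (n+2) := hn (n+1) (Nat.le_succ n)
  set P := (Nk k N) ^ (n+1) with hPdef
  have hfix : P ≤ Nk k N * P := le_of_eq (h1.trans (pow_succ' _ _))
  obtain ⟨s, hs⟩ := IsNoetherian.noetherian P
  have hsub : (↑s : Set A) ⊆ (P : Set A) := hs ▸ Submodule.subset_span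
  have hPs : (P : Set A) ⊆ (Submodule.span A (↑s : Set A) : Set A) := by
    have hsp : Submodule.span k (↑s : Set A) ≤
        (Submodule.span A (↑s : Set A)).restrictScalars k :=
      Submodule.span_le.2 fun x hx => Submodule.subset_span hx
    intro p hp
    exact hsp (hs ▸ hp)
  exact ⟨n, nak_aux hN P hfix s.card s rfl hsub hPs⟩

end CBU
open Submodule
namespace CBU

variable {k A : Type*} [Field k] [Ring A] [Algebra k A]

lemma sup_eq_of_finrank_le_one [FiniteDimensional k A] {V W U : Submodule k A}
    (hUV : U ≤ V)
    (h1 : Module.finrank k (↥V ⧸ (W.comap V.subtype)) ≤ 1)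
    (hU : ¬ U ≤ W) : V ≤ U ⊔ W := by
  obtain ⟨u, huU, huW⟩ := SetLike.not_le_iff_exists.1 hU
  set W' := W.comap V.subtype with hW'
  set u' : ↥V := ⟨u, hUV huU⟩ with hu'
  have hu0 : (W'.mkQ u' : ↥V ⧸ W') ≠ 0 := by
    intro hc
    rw [Submodule.mkQ_apply, Submodule.Quotient.mk_eq_zero] at hc
    exact huW (by simpa [hW', hu'] using hc)
  have hspan : Submodule.span k {W'.mkQ u'} = ⊤ := by
    have hfr : Module.finrank k (Submodule.span k {W'.mkQ u'}) = 1 :=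
      finrank_span_singleton hu0
    apply Submodule.eq_top_of_finrank_eq
    rw [hfr]
    refine le_antisymm ?_ h1
    calc 1 = Module.finrank k (Submodule.span k {W'.mkQ u'}) := hfr.symm
      _ ≤ Module.finrank k (↥V ⧸ W') := Submodule.finrank_le _
  intro v hv
  have hvq : W'.mkQ ⟨v, hv⟩ ∈ Submodule.span k {W'.mkQ u'} := hspan ▸ Submodule.mem_top
  obtain ⟨c, hc⟩ := Submodule.mem_span_singleton.1 hvq
  have hz : W'.mkQ ((⟨v, hv⟩ : ↥V) - c • u') = 0 := by
    rw [map_sub, map_smul, hc, sub_self]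
  have hmem : ((⟨v, hv⟩ : ↥V) - c • u') ∈ W' := by
    rwa [Submodule.mkQ_apply, Submodule.Quotient.mk_eq_zero] at hz
  have hWmem : v - c • u ∈ W := by simpa [hW', hu'] using hmem
  have hvdec : v = c • u + (v - c • u) := by abel
  rw [hvdec]
  exact Submodule.add_mem _ (Submodule.mem_sup_left (U.smul_mem c huU))
    (Submodule.mem_sup_right hWmem)

lemma chain_max (f : A → Submodule k A) :
    ∀ s : Finset A, (∀ x ∈ s, ∀ y ∈ s, f x ≤ f y ∨ f y ≤ f x) → s.Nonempty →
      ∃ x ∈ s, ∀ y ∈ s, f y ≤ f x := by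
  classical
  intro s
  induction s using Finset.induction with
  | empty => intro _ hne; exact absurd hne (by simp)
  | @insert a t ha ih =>
      intro hchain _
      rcases t.eq_empty_or_nonempty with rfl | htne
      · exact ⟨a, by simp, by simp⟩
      · obtain ⟨x, hxt, hx⟩ :=
          ih (fun x hx y hy => hchain x (by simp [hx]) y (by simp [hy])) htne
        rcases hchain a (by simp) x (by simp [hxt]) with h | h
        · refine ⟨x, by simp [hxt], fun y hy => ?_⟩
          rcases Finset.mem_insert.1 hy with rfl | hyt
          · exact h
          · exact hx y hyt
        · refine ⟨a, by simp, fun y hy => ?_⟩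
          rcases Finset.mem_insert.1 hy with rfl | hyt
          · exact le_rfl
          · exact (hx y hyt).trans h

end CBU
open Submodule
namespace CBU

/-- helper: product of singleton spans -/
lemma span_single_mul_single {k A : Type*} [Field k] [Ring A] [Algebra k A] (x y : A) :
    (Submodule.span k {x} : Submodule k A) * Submodule.span k {y} = Submodule.span k {x * y} := by
  rw [Submodule.span_mul_span, Set.singleton_mul_singleton]

end CBU

open CBU

/-- If the corner rings `e_x A e_x` and `e_y A e_y` are uniserial and the first two radical
layers of the bimodule `e_x A e_y` have `k`-dimension at most one, then `e_x A e_y` is a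
uniserial bimodule, and it is moreover cyclic as a left `e_x A e_x`-module or as a right
`e_y A e_y`-module. -/
theorem corner_bimodule_uniserial
    (k A : Type*) [Field k] [Ring A] [Algebra k A] [FiniteDimensional k A]
    (ex ey : A) (hxy : ex ≠ ey)
    (hx : ex * ex = ex) (hy : ey * ey = ey)
    (horth : ex * ey = 0 ∧ ey * ex = 0)
    (hxuni : ∀ I₁ I₂ : Submodule k A,
      ((∀ a ∈ I₁, ex * a * ex = a) ∧ ∀ b : A, ∀ a ∈ I₁, (ex * b * ex) * a ∈ I₁) →
      ((∀ a ∈ I₂, ex * a * ex = a) ∧ ∀ b : A, ∀ a ∈ I₂, (ex * b * ex) * a ∈ I₂) →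
      I₁ ≤ I₂ ∨ I₂ ≤ I₁)
    (hyuni : ∀ I₁ I₂ : Submodule k A,
      ((∀ a ∈ I₁, ey * a * ey = a) ∧ ∀ b : A, ∀ a ∈ I₁, (ey * b * ey) * a ∈ I₁) →
      ((∀ a ∈ I₂, ey * a * ey = a) ∧ ∀ b : A, ∀ a ∈ I₂, (ey * b * ey) * a ∈ I₂) →
      I₁ ≤ I₂ ∨ I₂ ≤ I₁)
    (N : Ideal A) (hN : N = Ideal.jacobson ⊥)
    (B : Submodule k A) (hB : B = Submodule.span k (Set.range fun a => ex * a * ey))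
    (radB : Submodule k A → Submodule k A)
    (hrad : ∀ J, radB J = Submodule.span k
      {a | ∃ m ∈ N, ∃ b ∈ J, a = ex * (m * b) * ey ∨ a = ex * (b * m) * ey})
    (hle : ∀ i < 2, Module.finrank k
      (↥(radB^[i] B) ⧸ ((radB^[i + 1] B).comap (radB^[i] B).subtype)) ≤ 1) :
    (∀ J₁ J₂ : Submodule k A,
      ((∀ a ∈ J₁, ex * a * ey = a) ∧ (∀ b : A, ∀ a ∈ J₁, (ex * b * ex) * a ∈ J₁) ∧
        (∀ b : A, ∀ a ∈ J₁, a * (ey * b * ey) ∈ J₁)) →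
      ((∀ a ∈ J₂, ex * a * ey = a) ∧ (∀ b : A, ∀ a ∈ J₂, (ex * b * ex) * a ∈ J₂) ∧
        (∀ b : A, ∀ a ∈ J₂, a * (ey * b * ey) ∈ J₂)) →
      J₁ ≤ J₂ ∨ J₂ ≤ J₁) ∧
    ((∃ b ∈ B, B = Submodule.span k {c | ∃ a : A, c = (ex * a * ex) * b}) ∨
      (∃ b ∈ B, B = Submodule.span k {c | ∃ a : A, c = b * (ey * a * ey)})) := by
  classical
  -- basic corner submodules
  set Bc := corner k ex ey with hBcdef
  set Rc := corner k ex ex with hRcdef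
  set Sc := corner k ey ey with hScdef
  have hBBc : B = Bc := by
    rw [hB]
    apply le_antisymm
    · rw [Submodule.span_le]
      rintro _ ⟨a, rfl⟩
      exact (corner_elem hx hy a : _)
    · intro a ha
      rw [hBcdef, mem_corner] at ha
      exact Submodule.subset_span ⟨a, ha⟩
  set N' := Nk k N with hN'def
  set Nx := Submodule.map ((LinearMap.mulRight k ex).comp (LinearMap.mulLeft k ex)) N'
    with hNxdef
  set Ny := Submodule.map ((LinearMap.mulRight k ey).comp (LinearMap.mulLeft k ey)) N'
    with hNydef
  have hNxiff : ∀ {z}, z ∈ Nx ↔ (z ∈ N ∧ ex * z * ex = z) := by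
    intro z
    constructor
    · rintro ⟨m, hm, rfl⟩
      simp only [LinearMap.coe_comp, Function.comp_apply, LinearMap.mulLeft_apply,
        LinearMap.mulRight_apply]
      constructor
      · exact jac_mul_right hN (N.smul_mem ex hm) ex
      · exact corner_elem hx hx m
    · rintro ⟨h1, h2⟩
      exact ⟨z, h1, by simpa using h2⟩
  have hNyiff : ∀ {z}, z ∈ Ny ↔ (z ∈ N ∧ ey * z * ey = z) := by
    intro z
    constructor
    · rintro ⟨m, hm, rfl⟩
      simp only [LinearMap.coe_comp, Function.comp_apply, LinearMap.mulLeft_apply,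
        LinearMap.mulRight_apply]
      constructor
      · exact jac_mul_right hN (N.smul_mem ey hm) ey
      · exact corner_elem hy hy m
    · rintro ⟨h1, h2⟩
      exact ⟨z, h1, by simpa using h2⟩
  -- corner closure facts
  have hRcBc : Rc * Bc ≤ Bc := mul_le_corner hx hx hy le_rfl le_rfl
  have hBcSc : Bc * Sc ≤ Bc := mul_le_corner hx hy hy le_rfl le_rfl
  have hRcRc : Rc * Rc ≤ Rc := mul_le_corner hx hx hx le_rfl le_rfl
  have hScSc : Sc * Sc ≤ Sc := mul_le_corner hy hy hy le_rfl le_rfl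
  have hNxRc : Nx ≤ Rc := fun z hz => (mem_corner).2 (hNxiff.1 hz).2
  have hNySc : Ny ≤ Sc := fun z hz => (mem_corner).2 (hNyiff.1 hz).2
  have hNxN : Nx ≤ N' := fun z hz => (hNxiff.1 hz).1
  have hNyN : Ny ≤ N' := fun z hz => (hNyiff.1 hz).1
  have hRcNx : Rc * Nx ≤ Nx := Submodule.mul_le.2 fun r hr z hz => by
    obtain ⟨hzN, hzc⟩ := hNxiff.1 hz
    exact hNxiff.2 ⟨N.smul_mem r hzN, corner_mul hx hx hx hr hzc⟩
  have hScNy : Sc * Ny ≤ Ny := Submodule.mul_le.2 fun r hr z hz => by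
    obtain ⟨hzN, hzc⟩ := hNyiff.1 hz
    exact hNyiff.2 ⟨N.smul_mem r hzN, corner_mul hy hy hy hr hzc⟩
  have hNySc' : Ny * Sc ≤ Ny := Submodule.mul_le.2 fun z hz r hr => by
    obtain ⟨hzN, hzc⟩ := hNyiff.1 hz
    exact hNyiff.2 ⟨jac_mul_right hN hzN r, corner_mul hy hy hy hzc hr⟩
  have heySc : ey ∈ Sc := by
    rw [hScdef, mem_corner, hy, hy]
  have hexRc : ex ∈ Rc := by
    rw [hRcdef, mem_corner, hx, hx]
  -- the radical formula
  have hradeq : ∀ J : Submodule k A, J ≤ Bc → radB J = Nx * J ⊔ J * Ny := by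
    intro J hJ
    rw [hrad]
    apply le_antisymm
    · rw [Submodule.span_le]
      rintro a ⟨m, hm, bb, hbb, rfl | rfl⟩
      · rw [id_left hx hy (hJ hbb)]
        exact Submodule.mem_sup_left (Submodule.mul_mem_mul
          (hNxiff.2 ⟨jac_mul_right hN (N.smul_mem ex hm) ex, corner_elem hx hx m⟩) hbb)
      · rw [id_right hx hy (hJ hbb)]
        exact Submodule.mem_sup_right (Submodule.mul_mem_mul hbb
          (hNyiff.2 ⟨jac_mul_right hN (N.smul_mem ey hm) ey, corner_elem hy hy m⟩))
    · refine sup_le (Submodule.mul_le.2 ?_) (Submodule.mul_le.2 ?_)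
      · intro z hz bb hbb
        obtain ⟨hzN, hzc⟩ := hNxiff.1 hz
        refine Submodule.subset_span ⟨z, hzN, bb, hbb, Or.inl ?_⟩
        rw [id_left hx hy (hJ hbb), hzc]
      · intro bb hbb z hz
        obtain ⟨hzN, hzc⟩ := hNyiff.1 hz
        refine Submodule.subset_span ⟨z, hzN, bb, hbb, Or.inr ?_⟩
        rw [id_right hx hy (hJ hbb), hzc]
  -- rad basic span lemmas
  have hradmono : ∀ X Y : Submodule k A, X ≤ Y → radB X ≤ radB Y := by
    intro X Y hXY
    rw [hrad, hrad]
    apply Submodule.span_mono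
    rintro a ⟨m, hm, bb, hbb, h⟩
    exact ⟨m, hm, bb, hXY hbb, h⟩
  have hradsup : ∀ X Y : Submodule k A, radB (X ⊔ Y) ≤ radB X ⊔ radB Y := by
    intro X Y
    rw [hrad]
    rw [Submodule.span_le]
    rintro a ⟨m, hm, bb, hbb, rfl | rfl⟩ <;>
      obtain ⟨xx, hxx, yy, hyy, rfl⟩ := Submodule.mem_sup.1 hbb
    · have hsplit : ex * (m * (xx + yy)) * ey = ex * (m * xx) * ey + ex * (m * yy) * ey := by
        rw [mul_add, mul_add, add_mul]
      rw [hsplit]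
      exact Submodule.add_mem _
        (Submodule.mem_sup_left (by rw [hrad]; exact Submodule.subset_span ⟨m, hm, xx, hxx, Or.inl rfl⟩))
        (Submodule.mem_sup_right (by rw [hrad]; exact Submodule.subset_span ⟨m, hm, yy, hyy, Or.inl rfl⟩))
    · have hsplit : ex * ((xx + yy) * m) * ey = ex * (xx * m) * ey + ex * (yy * m) * ey := by
        rw [add_mul, mul_add, add_mul]
      rw [hsplit]
      exact Submodule.add_mem _
        (Submodule.mem_sup_left (by rw [hrad]; exact Submodule.subset_span ⟨m, hm, xx, hxx, Or.inr rfl⟩))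
        (Submodule.mem_sup_right (by rw [hrad]; exact Submodule.subset_span ⟨m, hm, yy, hyy, Or.inr rfl⟩))
  have hradJle : ∀ J : Submodule k A, (∀ a ∈ J, ex * a * ey = a) →
      (∀ c : A, ∀ a ∈ J, (ex * c * ex) * a ∈ J) →
      (∀ c : A, ∀ a ∈ J, a * (ey * c * ey) ∈ J) → radB J ≤ J := by
    intro J h1 h2 h3
    rw [hrad]
    rw [Submodule.span_le]
    rintro a ⟨m, hm, bb, hbb, rfl | rfl⟩
    · rw [id_left hx hy (h1 bb hbb)]
      exact h2 m bb hbb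
    · rw [id_right hx hy (h1 bb hbb)]
      exact h3 m bb hbb
  -- iterated radical
  set f : ℕ → Submodule k A := fun i => radB^[i] B with hfdef
  have hf0 : f 0 = B := rfl
  have hfs : ∀ i, f (i+1) = radB (f i) := fun i => Function.iterate_succ_apply' radB i B
  have hSB : ∀ i, f i ≤ Bc ∧ Rc * f i ≤ f i ∧ f i * Sc ≤ f i := by
    intro i
    induction i with
    | zero =>
        rw [hf0, hBBc]
        exact ⟨le_rfl, hRcBc, hBcSc⟩
    | succ i ih =>
        have hfri : f (i+1) = Nx * f i ⊔ f i * Ny := by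
          rw [hfs i, hradeq _ ih.1]
        refine ⟨?_, ?_, ?_⟩
        · rw [hfri]
          exact sup_le (mul_le_corner hx hx hy hNxRc ih.1) (mul_le_corner hx hy hy ih.1 hNySc)
        · rw [hfri, Submodule.mul_sup]
          refine sup_le ?_ ?_
          · calc Rc * (Nx * f i) = (Rc * Nx) * f i := (mul_assoc _ _ _).symm
              _ ≤ Nx * f i := (mul_le_mul_left hRcNx _)
              _ ≤ _ := le_sup_left
          · calc Rc * (f i * Ny) = (Rc * f i) * Ny := (mul_assoc _ _ _).symm
              _ ≤ f i * Ny := (mul_le_mul_left ih.2.1 _)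
              _ ≤ _ := le_sup_right
        · rw [hfri, Submodule.sup_mul]
          refine sup_le ?_ ?_
          · calc (Nx * f i) * Sc = Nx * (f i * Sc) := mul_assoc _ _ _
              _ ≤ Nx * f i := (mul_le_mul_right ih.2.2 _)
              _ ≤ _ := le_sup_left
          · calc (f i * Ny) * Sc = f i * (Ny * Sc) := mul_assoc _ _ _
              _ ≤ f i * Ny := (mul_le_mul_right hNySc' _)
              _ ≤ _ := le_sup_right
  have hfr : ∀ i, f (i+1) = Nx * f i ⊔ f i * Ny := fun i => by
    rw [hfs i, hradeq _ (hSB i).1]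
  have hfdec : ∀ i, f (i+1) ≤ f i := by
    intro i
    rw [hfr i]
    exact sup_le (le_trans ((mul_le_mul_left hNxRc _)) (hSB i).2.1)
      (le_trans ((mul_le_mul_right hNySc _)) (hSB i).2.2)
  have hfmono : ∀ {i j : ℕ}, i ≤ j → f j ≤ f i := by
    intro i j h
    induction h with
    | refl => exact le_rfl
    | @step m hm ih => exact (hfdec m).trans ih
  have hNxf : ∀ i, Nx * f i ≤ f (i+1) := fun i => by rw [hfr i]; exact le_sup_left
  have hfNy : ∀ i, f i * Ny ≤ f (i+1) := fun i => by rw [hfr i]; exact le_sup_right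
  -- nilpotency
  obtain ⟨nn, hnn⟩ := exists_pow_bot (k := k) hN
  have hpowbot : ∀ q, nn + 1 ≤ q → N' ^ q = ⊥ := by
    intro q hq
    have hsplit : N' ^ q = N' ^ (nn+1) * N' ^ (q - (nn+1)) := by
      rw [← pow_add]
      congr 1
      omega
    rw [hsplit, hnn, Submodule.bot_mul]
  have hradN : ∀ i, f (i+1) ≤ N' * f i ⊔ f i * N' := fun i => by
    rw [hfr i]
    exact sup_le (le_trans ((mul_le_mul_left hNxN _)) le_sup_left)
      (le_trans ((mul_le_mul_right hNyN _)) le_sup_right)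
  have hG : ∀ i, f i ≤ ⨆ p : Fin (i+1), (N' ^ (p : ℕ) * Bc) * N' ^ (i - (p : ℕ)) := by
    intro i
    induction i with
    | zero =>
        rw [hf0, hBBc]
        refine le_trans ?_ (le_iSup (fun p : Fin 1 => (N' ^ (p:ℕ) * Bc) * N' ^ (0 - (p:ℕ))) 0)
        simp
    | succ i ih =>
        refine (hradN i).trans (sup_le ?_ ?_)
        · refine ((mul_le_mul_right ih _)).trans ?_
          refine mul_iSup_le _ _ _ fun p => ?_
          have hcalc : N' * ((N' ^ (p:ℕ) * Bc) * N' ^ (i - (p:ℕ)))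
              = (N' ^ ((p:ℕ)+1) * Bc) * N' ^ (i - (p:ℕ)) := by
            rw [← mul_assoc, ← mul_assoc, ← pow_succ']
          rw [hcalc]
          have h2 := le_iSup (fun q : Fin (i+2) => (N' ^ (q:ℕ) * Bc) * N' ^ ((i+1) - (q:ℕ)))
            ⟨(p:ℕ)+1, by omega⟩
          refine le_trans (le_of_eq ?_) h2
          have hidx : (i+1) - ((p:ℕ)+1) = i - (p:ℕ) := by omega
          simp [hidx]
        · refine ((mul_le_mul_left ih _)).trans ?_
          refine iSup_mul_le _ _ _ fun p => ?_
          have hp : (p : ℕ) ≤ i := by omega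
          have hcalc : ((N' ^ (p:ℕ) * Bc) * N' ^ (i - (p:ℕ))) * N'
              = (N' ^ (p:ℕ) * Bc) * N' ^ ((i - (p:ℕ)) + 1) := by
            rw [mul_assoc, ← pow_succ]
          rw [hcalc]
          have h2 := le_iSup (fun q : Fin (i+2) => (N' ^ (q:ℕ) * Bc) * N' ^ ((i+1) - (q:ℕ)))
            ⟨(p:ℕ), by omega⟩
          refine le_trans (le_of_eq ?_) h2
          have hidx : (i+1) - (p:ℕ) = (i - (p:ℕ)) + 1 := by omega
          simp [hidx]
  have hfbot : f (2*nn+2) = ⊥ := by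
    refine le_bot_iff.1 ((hG (2*nn+2)).trans (iSup_le fun p => ?_))
    rcases le_or_gt (nn+1) (p : ℕ) with h | h
    · rw [hpowbot _ h, Submodule.bot_mul, Submodule.bot_mul]
    · have : nn + 1 ≤ 2*nn+2 - (p:ℕ) := by omega
      rw [hpowbot _ this, Submodule.mul_bot]
  -- case: B = rad B
  by_cases hB1 : B ≤ f 1
  · have hBf : ∀ i, B ≤ f i := by
      intro i
      induction i with
      | zero => rw [hf0]
      | succ i ih =>
          calc B ≤ f 1 := hB1
            _ = radB (f 0) := hfs 0
            _ ≤ radB (f i) := hradmono _ _ (by rw [hf0]; exact ih)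
            _ = f (i+1) := (hfs i).symm
    have hBbot : B = ⊥ := le_bot_iff.1 ((hBf (2*nn+2)).trans (le_of_eq hfbot))
    constructor
    · intro J₁ J₂ h1 _
      left
      have hJ1 : J₁ ≤ Bc := fun a ha => (mem_corner).2 (h1.1 a ha)
      rw [← hBBc, hBbot] at hJ1
      intro zz hz
      have hzz := hJ1 hz
      simp only [Submodule.mem_bot] at hzz
      simp [hzz]
    · left
      refine ⟨0, B.zero_mem, le_antisymm ?_ ?_⟩
      · rw [hBbot]; exact bot_le
      · rw [Submodule.span_le]
        rintro c ⟨a, rfl⟩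
        simp only [mul_zero, SetLike.mem_coe]
        exact B.zero_mem
  · -- pick a generator b of the top
    obtain ⟨b, hbB, hbf1⟩ := SetLike.not_le_iff_exists.1 hB1
    have hbBc : ex * b * ey = b := by
      have := hBBc ▸ hbB
      rwa [hBcdef, mem_corner] at this
    have hBsup : B = Submodule.span k {b} ⊔ f 1 := by
      apply le_antisymm
      · have h0 := sup_eq_of_finrank_le_one (V := f 0) (W := f 1)
          (U := Submodule.span k {b})
          (by rw [hf0]; exact (Submodule.span_le).2 (by simpa using hbB))
          (hle 0 (by omega))
          (by intro hcon; exact hbf1 (hcon (Submodule.subset_span rfl)))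
        rw [hf0] at h0
        exact h0
      · exact sup_le ((Submodule.span_le).2 (by simpa using hbB)) (by rw [← hf0]; exact hfdec 0)
    by_cases hcase : Nx * B ≤ f 2
    · -- right-serial case
      -- Ny is principal as a left ideal of the corner ring Sc
      obtain ⟨n₀, hn₀Ny, hNyeq⟩ : ∃ n₀ ∈ Ny, Ny = Sc * Submodule.span k {n₀} := by
        obtain ⟨s, hs⟩ := IsNoetherian.noetherian Ny
        rcases s.eq_empty_or_nonempty with rfl | hne
        · refine ⟨0, Ny.zero_mem, ?_⟩
          have hNybot : Ny = ⊥ := by rw [← hs]; simp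
          rw [hNybot, Submodule.span_zero_singleton, Submodule.mul_bot]
        · have hsNy : ∀ x ∈ s, x ∈ Ny := fun x hxs => hs ▸ Submodule.subset_span hxs
          have hgle : ∀ x ∈ Ny, Sc * Submodule.span k {x} ≤ Sc := fun x hxNy =>
            mul_le_corner hy hy hy le_rfl
              ((Submodule.span_le).2 (Set.singleton_subset_iff.2 (hNySc hxNy)))
          have hScg : ∀ x : A, Sc * (Sc * Submodule.span k {x}) ≤ Sc * Submodule.span k {x} :=
            fun x => by
              calc Sc * (Sc * Submodule.span k {x}) = (Sc * Sc) * Submodule.span k {x} :=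
                    (mul_assoc _ _ _).symm
                _ ≤ Sc * Submodule.span k {x} := (mul_le_mul_left hScSc _)
          have hchain : ∀ x ∈ s, ∀ y ∈ s,
              Sc * Submodule.span k {x} ≤ Sc * Submodule.span k {y} ∨
              Sc * Submodule.span k {y} ≤ Sc * Submodule.span k {x} := by
            intro x hxs y hys
            apply hyuni
            · refine ⟨fun a ha => (mem_corner).1 (hgle x (hsNy x hxs) ha), fun c a ha => ?_⟩
              have hc : ey*c*ey ∈ Sc := (mem_corner).2 (corner_elem hy hy c)
              exact hScg x (Submodule.mul_mem_mul hc ha)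
            · refine ⟨fun a ha => (mem_corner).1 (hgle y (hsNy y hys) ha), fun c a ha => ?_⟩
              have hc : ey*c*ey ∈ Sc := (mem_corner).2 (corner_elem hy hy c)
              exact hScg y (Submodule.mul_mem_mul hc ha)
          obtain ⟨x₀, hx₀s, hmax⟩ := chain_max (fun z => Sc * Submodule.span k {z}) s hchain hne
          refine ⟨x₀, hsNy x₀ hx₀s, le_antisymm ?_ ?_⟩
          · rw [← hs, Submodule.span_le]
            intro z hzs
            have hz : z ∈ Sc * Submodule.span k {z} := by
              have h1 : ey * z = z := eabs hy ((mem_corner).1 (hNySc (hsNy z hzs)))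
              have h2 := Submodule.mul_mem_mul heySc
                (Submodule.mem_span_singleton_self z)
              rwa [h1] at h2
            exact hmax z hzs hz
          · calc Sc * Submodule.span k {x₀} ≤ Sc * Ny :=
                (mul_le_mul_right
                  ((Submodule.span_le).2 (by simpa using hsNy x₀ hx₀s)) _)
              _ ≤ Ny := hScNy
      have hinvR : ∀ i, Nx * f i ≤ f (i+2) := by
        intro i
        induction i with
        | zero => rw [hf0]; exact hcase
        | succ i ih =>
            rw [hfr i, Submodule.mul_sup]
            refine sup_le ?_ ?_
            · exact le_trans ((mul_le_mul_right ih _)) (hNxf (i+2))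
            · calc Nx * (f i * Ny) = (Nx * f i) * Ny := (mul_assoc _ _ _).symm
                _ ≤ f (i+2) * Ny := (mul_le_mul_left ih _)
                _ ≤ f (i+3) := hfNy (i+2)
      have hstepR : ∀ i, f (i+1) = f i * Ny := by
        intro i
        refine le_antisymm ?_ (hfNy i)
        have hiter : ∀ t, f (i+1) ≤ f i * Ny ⊔ f (i+1+t) := by
          intro t
          induction t with
          | zero => exact le_sup_right
          | succ t ih =>
              refine ih.trans (sup_le le_sup_left ?_)
              have hidx : i+1+t = (i+t)+1 := by omega
              rw [hidx, hfr (i+t)]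
              refine sup_le ?_ ?_
              · refine le_trans (hinvR (i+t)) ?_
                exact le_trans (le_of_eq (congrArg f (by omega))) le_sup_right
              · exact le_trans ((mul_le_mul_left (hfmono (by omega)) _)) le_sup_left
        have h2 := hiter (2*nn+2)
        have h3 : f (i+1+(2*nn+2)) = ⊥ :=
          le_bot_iff.1 ((hfmono (by omega)).trans (le_of_eq hfbot))
        rw [h3, sup_bot_eq] at h2
        exact h2
      have hfiSc : ∀ i, f i * Sc = f i := by
        intro i
        refine le_antisymm (hSB i).2.2 ?_
        intro x hxm
        have hxc : ex * x * ey = x := (mem_corner).1 ((hSB i).1 hxm)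
        have hxey : x * ey = x := fabs hy hxc
        have h2 := Submodule.mul_mem_mul hxm heySc
        rwa [hxey] at h2
      have hstepR' : ∀ i, f (i+1) = f i * Submodule.span k {n₀} := by
        intro i
        rw [hstepR i, hNyeq,
          show f i * (Sc * Submodule.span k {n₀}) = (f i * Sc) * Submodule.span k {n₀} from
            (mul_assoc _ _ _).symm,
          hfiSc i]
      have hlayerR : ∀ i, (b * n₀^i ∈ f i) ∧
          f i = Submodule.span k {b * n₀^i} ⊔ f (i+1) := by
        intro i
        induction i with
        | zero =>
            constructor
            · rw [hf0]; simpa using hbB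
            · rw [hf0, pow_zero, mul_one]; exact hBsup
        | succ i ih =>
            have hss : Submodule.span k {b * n₀^i} * Submodule.span k {n₀}
                = Submodule.span k {b * n₀^(i+1)} := by
              rw [span_single_mul_single, mul_assoc, ← pow_succ]
            constructor
            · rw [hstepR' i]
              have h2 := Submodule.mul_mem_mul ih.1
                (Submodule.mem_span_singleton_self n₀)
              rwa [show b * n₀^i * n₀ = b * n₀^(i+1) by rw [mul_assoc, ← pow_succ]] at h2
            · rw [hstepR' i]
              conv_lhs => rw [ih.2]
              rw [Submodule.sup_mul, hss, ← hstepR' (i+1)]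
      -- right-cyclicity of B
      have hn₀Sc : ∀ j, n₀^(j+1) ∈ Sc := by
        intro j
        induction j with
        | zero => simpa using hNySc hn₀Ny
        | succ j ih =>
            rw [pow_succ]
            exact hScSc (Submodule.mul_mem_mul ih (hNySc hn₀Ny))
      set S2 : Submodule k A := Submodule.span k {c | ∃ a : A, c = b * (ey * a * ey)} with hS2
      have hS2B : S2 ≤ B := by
        rw [hS2, Submodule.span_le]
        rintro c ⟨a, rfl⟩
        rw [hBBc]
        exact hBcSc (Submodule.mul_mem_mul (hBBc ▸ hbB)
          ((mem_corner).2 (corner_elem hy hy a)))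
      have hbn₀S2 : ∀ j, b * n₀^j ∈ S2 := by
        intro j
        rcases j with _ | j
        · refine Submodule.subset_span ⟨1, ?_⟩
          rw [pow_zero, mul_one, mul_one, hy]
          exact (fabs hy hbBc).symm
        · refine Submodule.subset_span ⟨n₀^(j+1), ?_⟩
          rw [(mem_corner).1 (hn₀Sc j)]
      have hBS2f : ∀ j, B ≤ S2 ⊔ f j := by
        intro j
        induction j with
        | zero => rw [hf0]; exact le_sup_right
        | succ j ih =>
            refine ih.trans (sup_le le_sup_left ?_)
            rw [(hlayerR j).2]
            refine sup_le ?_ le_sup_right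
            exact le_trans ((Submodule.span_le).2 (by simpa using hbn₀S2 j)) le_sup_left
      have hBS2 : B = S2 := by
        refine le_antisymm ?_ hS2B
        have h2 := hBS2f (2*nn+2)
        rwa [hfbot, sup_bot_eq] at h2
      -- classification of subbimodules
      have hclass : ∀ J : Submodule k A,
          (∀ a ∈ J, ex * a * ey = a) → (∀ c : A, ∀ a ∈ J, (ex*c*ex)*a ∈ J) →
          (∀ c : A, ∀ a ∈ J, a*(ey*c*ey) ∈ J) → J = ⊥ ∨ ∃ i, J = f i := by
        intro J h1 h2 h3
        by_cases hJbot : J = ⊥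
        · exact Or.inl hJbot
        right
        have hJB : J ≤ f 0 := by
          rw [hf0, hBBc]
          intro a ha
          exact (mem_corner).2 (h1 a ha)
        have hJrad : radB J ≤ J := hradJle J h1 h2 h3
        have hex2 : ∃ i, ¬ J ≤ f i := by
          refine ⟨2*nn+2, ?_⟩
          rw [hfbot]
          intro hcon
          exact hJbot (le_bot_iff.1 hcon)
        have hi₀pos : Nat.find hex2 ≠ 0 := by
          intro h0
          exact (h0 ▸ Nat.find_spec hex2) hJB
        obtain ⟨i, hi⟩ : ∃ i, Nat.find hex2 = i + 1 := ⟨Nat.find hex2 - 1, by omega⟩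
        have hJi : J ≤ f i := by
          by_contra hcon
          have := Nat.find_min' hex2 hcon
          omega
        have hJn : ¬ J ≤ f (i+1) := hi ▸ Nat.find_spec hex2
        refine ⟨i, ?_⟩
        obtain ⟨j, hjJ, hjf⟩ := SetLike.not_le_iff_exists.1 hJn
        have hjmem : j ∈ Submodule.span k {b*n₀^i} ⊔ f (i+1) := (hlayerR i).2 ▸ hJi hjJ
        obtain ⟨z, hz, w, hw, hjzw⟩ := Submodule.mem_sup.1 hjmem
        obtain ⟨c, rfl⟩ := Submodule.mem_span_singleton.1 hz
        have hc0 : c ≠ 0 := by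
          rintro rfl
          apply hjf
          rw [← hjzw]
          simpa using hw
        have hbn₀J : b * n₀^i ∈ J ⊔ f (i+1) := by
          have hrepr : b*n₀^i = c⁻¹ • (j - w) := by
            rw [← hjzw, add_sub_cancel_right, smul_smul, inv_mul_cancel₀ hc0, one_smul]
          rw [hrepr]
          exact Submodule.smul_mem _ _
            (Submodule.sub_mem _ (Submodule.mem_sup_left hjJ) (Submodule.mem_sup_right hw))
        have hitop : f i = J ⊔ f (i+1) := by
          apply le_antisymm
          · rw [(hlayerR i).2]
            exact sup_le ((Submodule.span_le).2 (by simpa using hbn₀J)) le_sup_right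
          · exact sup_le hJi (hfdec i)
        have hT : ∀ t, f (i+1+t) ≤ J ⊔ f (i+2+t) := by
          intro t
          induction t with
          | zero =>
              rw [show i+1+0 = i+1 by omega, hfs i, hitop]
              refine (hradsup _ _).trans (sup_le ?_ ?_)
              · exact le_trans hJrad le_sup_left
              · rw [← hfs (i+1)]
                exact le_trans (le_of_eq (congrArg f (by omega))) le_sup_right
          | succ t ih =>
              have h4 : f (i+1+(t+1)) = radB (f (i+1+t)) := by
                rw [show i+1+(t+1) = (i+1+t)+1 by omega, hfs]
              rw [h4]
              refine le_trans (hradmono _ _ ih) ((hradsup _ _).trans (sup_le ?_ ?_))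
              · exact le_trans hJrad le_sup_left
              · have h5 : radB (f (i+2+t)) = f (i+2+(t+1)) := by
                  rw [show i+2+(t+1) = (i+2+t)+1 by omega, hfs]
                rw [h5]
                exact le_sup_right
        have hUt : ∀ t, f (i+1) ≤ J ⊔ f (i+1+t) := by
          intro t
          induction t with
          | zero => exact le_sup_right
          | succ t ih =>
              refine ih.trans (sup_le le_sup_left ?_)
              refine (hT t).trans (sup_le le_sup_left ?_)
              exact le_trans (le_of_eq (congrArg f (by omega))) le_sup_right
        have hfJ : f (i+1) ≤ J := by
          have h6 := hUt (2*nn+2)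
          have hbb : f (i+1+(2*nn+2)) = ⊥ :=
            le_bot_iff.1 ((hfmono (by omega)).trans (le_of_eq hfbot))
          rwa [hbb, sup_bot_eq] at h6
        exact le_antisymm hJi (by rw [hitop]; exact sup_le le_rfl hfJ)
      constructor
      · intro J₁ J₂ hJ1 hJ2
        rcases hclass J₁ hJ1.1 hJ1.2.1 hJ1.2.2 with rfl | ⟨i₁, rfl⟩
        · exact Or.inl bot_le
        rcases hclass J₂ hJ2.1 hJ2.2.1 hJ2.2.2 with rfl | ⟨i₂, rfl⟩
        · exact Or.inr bot_le
        rcases le_total i₁ i₂ with h | h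
        · exact Or.inr (hfmono h)
        · exact Or.inl (hfmono h)
      · right
        exact ⟨b, hbB, hBS2⟩
    · -- left-serial case
      have hNxB1 : Nx * B ≤ f 1 := by
        have h0 := hNxf 0
        rwa [hf0] at h0
      have hBNy1 : B * Ny ≤ f 1 := by
        have h0 := hfNy 0
        rwa [hf0] at h0
      have hlayer1 : f 1 ≤ Nx * B ⊔ f 2 :=
        sup_eq_of_finrank_le_one (V := f 1) (W := f 2) (U := Nx * B) hNxB1
          (hle 1 (by omega)) hcase
      have hbscope : Submodule.span k {b} ≤ B := (Submodule.span_le).2 (by simpa using hbB)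
      have hNxb2 : Nx * B ≤ Nx * Submodule.span k {b} ⊔ f 2 := by
        conv_lhs => rw [hBsup]
        rw [Submodule.mul_sup]
        exact sup_le le_sup_left (le_trans (hNxf 1) le_sup_right)
      have hbNy : Submodule.span k {b} * Ny ≤ Nx * Submodule.span k {b} ⊔ f 2 :=
        calc Submodule.span k {b} * Ny ≤ B * Ny := (mul_le_mul_left hbscope _)
          _ ≤ f 1 := hBNy1
          _ ≤ Nx * B ⊔ f 2 := hlayer1
          _ ≤ Nx * Submodule.span k {b} ⊔ f 2 := sup_le hNxb2 le_sup_right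
      have hBNy2 : B * Ny ≤ Nx * Submodule.span k {b} ⊔ f 2 := by
        conv_lhs => rw [hBsup]
        rw [Submodule.sup_mul]
        exact sup_le hbNy (le_trans (hfNy 1) le_sup_right)
      have hNxpow : ∀ j i, Nx^(j+1) * f i ≤ f (i+j+1) := by
        intro j
        induction j with
        | zero =>
            intro i
            rw [pow_one]
            exact le_trans (hNxf i) (le_of_eq (congrArg f (by omega)))
        | succ j ih =>
            intro i
            calc Nx^(j+2) * f i = (Nx * Nx^(j+1)) * f i := by rw [pow_succ']
              _ = Nx * (Nx^(j+1) * f i) := mul_assoc _ _ _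
              _ ≤ Nx * f (i+j+1) := (mul_le_mul_right (ih i) _)
              _ ≤ f (i+j+2) := le_trans (hNxf (i+j+1)) (le_of_eq (congrArg f (by omega)))
      have hNxpowb : ∀ j, Nx^(j+1) * (Nx * Submodule.span k {b} ⊔ f 2) ≤
          Nx^(j+2) * Submodule.span k {b} ⊔ f (j+3) := by
        intro j
        rw [Submodule.mul_sup]
        refine sup_le ?_ ?_
        · calc Nx^(j+1) * (Nx * Submodule.span k {b})
              = (Nx^(j+1) * Nx) * Submodule.span k {b} := (mul_assoc _ _ _).symm
            _ = Nx^(j+2) * Submodule.span k {b} := by rw [← pow_succ]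
            _ ≤ _ := le_sup_left
        · exact le_trans (hNxpow j 2)
            (le_trans (le_of_eq (congrArg f (by omega))) le_sup_right)
      have hinvL : ∀ i, (f (i+1) ≤ Nx^(i+1) * Submodule.span k {b} ⊔ f (i+2)) ∧
          (f (i+1) * Ny ≤ Nx^(i+2) * Submodule.span k {b} ⊔ f (i+3)) := by
        intro i
        induction i with
        | zero =>
            have first : f 1 ≤ Nx^1 * Submodule.span k {b} ⊔ f 2 := by
              rw [pow_one]
              exact hlayer1.trans (sup_le hNxb2 le_sup_right)
            refine ⟨first, ?_⟩
            refine le_trans ((mul_le_mul_left first _)) ?_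
            rw [Submodule.sup_mul]
            refine sup_le ?_ (le_trans (hfNy 2) le_sup_right)
            rw [pow_one]
            calc (Nx * Submodule.span k {b}) * Ny
                = Nx * (Submodule.span k {b} * Ny) := mul_assoc _ _ _
              _ ≤ Nx * (Nx * Submodule.span k {b} ⊔ f 2) := (mul_le_mul_right hbNy _)
              _ = Nx^1 * (Nx * Submodule.span k {b} ⊔ f 2) := by rw [pow_one]
              _ ≤ Nx^2 * Submodule.span k {b} ⊔ f 3 := hNxpowb 0
        | succ i ih =>
            have first : f (i+2) ≤ Nx^(i+2) * Submodule.span k {b} ⊔ f (i+3) := by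
              rw [hfr (i+1)]
              refine sup_le ?_ ih.2
              refine le_trans ((mul_le_mul_right ih.1 _)) ?_
              rw [Submodule.mul_sup]
              refine sup_le ?_ (le_trans (hNxf (i+2)) le_sup_right)
              calc Nx * (Nx^(i+1) * Submodule.span k {b})
                  = (Nx * Nx^(i+1)) * Submodule.span k {b} := (mul_assoc _ _ _).symm
                _ = Nx^(i+2) * Submodule.span k {b} := by rw [← pow_succ']
                _ ≤ _ := le_sup_left
            refine ⟨first, ?_⟩
            refine le_trans ((mul_le_mul_left first _)) ?_
            rw [Submodule.sup_mul]
            refine sup_le ?_ (le_trans (hfNy (i+3)) le_sup_right)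
            calc (Nx^(i+2) * Submodule.span k {b}) * Ny
                = Nx^(i+2) * (Submodule.span k {b} * Ny) := mul_assoc _ _ _
              _ ≤ Nx^(i+2) * (Nx * Submodule.span k {b} ⊔ f 2) :=
                  (mul_le_mul_right hbNy _)
              _ ≤ Nx^(i+3) * Submodule.span k {b} ⊔ f (i+4) := hNxpowb (i+1)
      -- left-cyclicity of B
      set T2 : Submodule k A := Submodule.span k {c | ∃ a : A, c = (ex * a * ex) * b} with hT2
      have hT2B : T2 ≤ B := by
        rw [hT2, Submodule.span_le]
        rintro c ⟨a, rfl⟩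
        rw [hBBc]
        exact hRcBc (Submodule.mul_mem_mul ((mem_corner).2 (corner_elem hx hx a))
          (hBBc ▸ hbB))
      have hNxjRc : ∀ j, (Nx^(j+1) : Submodule k A) ≤ Rc := by
        intro j
        induction j with
        | zero => rw [pow_one]; exact hNxRc
        | succ j ih =>
            rw [pow_succ]
            exact le_trans (mul_le_mul' ih hNxRc) hRcRc
      have hNxspan : ∀ j, Nx^(j+1) * Submodule.span k {b} ≤ T2 := by
        intro j
        refine Submodule.mul_le.2 fun u hu v hv => ?_
        obtain ⟨c, rfl⟩ := Submodule.mem_span_singleton.1 hv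
        have hur : ex * u * ex = u := (mem_corner).1 (hNxjRc j hu)
        rw [mul_smul_comm c u b]
        refine Submodule.smul_mem _ _ ?_
        exact Submodule.subset_span ⟨u, by rw [hur]⟩
      have hbT2 : b ∈ T2 := by
        refine Submodule.subset_span ⟨1, ?_⟩
        rw [mul_one, hx]
        exact (eabs hx hbBc).symm
      have hBT2f : ∀ j, B ≤ T2 ⊔ f j := by
        intro j
        induction j with
        | zero => rw [hf0]; exact le_sup_right
        | succ j ih =>
            refine ih.trans (sup_le le_sup_left ?_)
            rcases j with _ | j
            · rw [hf0]
              refine le_trans (le_of_eq hBsup) (sup_le ?_ le_sup_right)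
              exact le_trans ((Submodule.span_le).2 (by simpa using hbT2)) le_sup_left
            · refine ((hinvL j).1).trans (sup_le ?_ le_sup_right)
              exact le_trans (hNxspan j) le_sup_left
      have hBT2 : B = T2 := by
        refine le_antisymm ?_ hT2B
        have h2 := hBT2f (2*nn+2)
        rwa [hfbot, sup_bot_eq] at h2
      have hrep : ∀ z ∈ B, ∃ r, ex * r * ex = r ∧ r * b = z := by
        intro z hz
        rw [hBT2, hT2] at hz
        have hle2 : Submodule.span k {c | ∃ a : A, c = (ex*a*ex)*b} ≤
            Submodule.map (LinearMap.mulRight k b) Rc := by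
          rw [Submodule.span_le]
          rintro c ⟨a, rfl⟩
          exact ⟨ex*a*ex, (mem_corner).2 (corner_elem hx hx a), rfl⟩
        obtain ⟨r, hrRc, hrb⟩ := hle2 hz
        exact ⟨r, (mem_corner).1 hrRc, hrb⟩
      constructor
      · intro J₁ J₂ hJ1 hJ2
        have hLmk : ∀ J : Submodule k A, ∃ L : Submodule k A,
            (∀ r : A, r ∈ L ↔ (ex * r * ex = r ∧ r * b ∈ J)) := by
          intro J
          refine ⟨Rc ⊓ Submodule.comap (LinearMap.mulRight k b) J, fun r => ?_⟩
          rw [Submodule.mem_inf, Submodule.mem_comap, LinearMap.mulRight_apply]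
          exact and_congr_left fun _ => mem_corner
        obtain ⟨L₁, hL₁⟩ := hLmk J₁
        obtain ⟨L₂, hL₂⟩ := hLmk J₂
        have hLprop : ∀ (L : Submodule k A) (J : Submodule k A),
            (∀ r : A, r ∈ L ↔ (ex * r * ex = r ∧ r * b ∈ J)) →
            (∀ c : A, ∀ a ∈ J, (ex*c*ex)*a ∈ J) →
            ((∀ a ∈ L, ex*a*ex = a) ∧ ∀ c : A, ∀ r ∈ L, (ex*c*ex)*r ∈ L) := by
          intro L J hLiff hJc
          refine ⟨fun a ha => ((hLiff a).1 ha).1, fun c r hr => ?_⟩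
          obtain ⟨hr1, hr2⟩ := (hLiff r).1 hr
          refine (hLiff _).2 ⟨corner_mul hx hx hx (corner_elem hx hx c) hr1, ?_⟩
          rw [mul_assoc]
          exact hJc c _ hr2
        have hcomp : ∀ (Lp Jp Lq Jq : Submodule k A),
            (∀ r : A, r ∈ Lp ↔ (ex * r * ex = r ∧ r * b ∈ Jp)) →
            (∀ r : A, r ∈ Lq ↔ (ex * r * ex = r ∧ r * b ∈ Jq)) →
            (∀ a ∈ Jp, ex * a * ey = a) → Lp ≤ Lq → Jp ≤ Jq := by
          intro Lp Jp Lq Jq hLp hLq hJp hLe z hz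
          have hzB : z ∈ B := by
            rw [hBBc]
            exact (mem_corner).2 (hJp z hz)
          obtain ⟨r, hr1, hr2⟩ := hrep z hzB
          have hrL : r ∈ Lp := (hLp r).2 ⟨hr1, by rw [hr2]; exact hz⟩
          have h2 := (hLq r).1 (hLe hrL)
          rw [← hr2]
          exact h2.2
        rcases hxuni L₁ L₂ (hLprop L₁ J₁ hL₁ hJ1.2.1) (hLprop L₂ J₂ hL₂ hJ2.2.1) with h | h
        · exact Or.inl (hcomp L₁ J₁ L₂ J₂ hL₁ hL₂ hJ1.1 h)
        · exact Or.inr (hcomp L₂ J₂ L₁ J₁ hL₂ hL₁ hJ2.1 h)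
      · left
        exact ⟨b, hbB, hBT2⟩
end
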